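/- arXiv:1411.0333 — 6 statements merged into one kernel-verified Lean document; each statement's English description precedes it below -/
import Mathlib

section
/- Let d ≥ 1 and n ≥ 3, and let A_1, …, A_n ∈ M(d) be positive-semidefinite matrices. Then (1/n³) · Σ_{i,j,k=1}^{n} ‖A_i A_j A_k‖ ≥ ((n−3)!/n!) · Σ_{i,j,k=1, i,j,k pairwise distinct}^{n} ‖A_i A_j A_k‖, where ‖·‖ is the operator norm. -/
open Matrix Finset
open scoped ComplexOrder

/-- The matrix $\ell^2 \to \ell^2$ operator norm (largest singular value). -/
noncomputable def opNorm {d : ℕ} (X : Matrix (Fin d) (Fin d) ℂ) : ℝ :=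
  ‖Matrix.toEuclideanCLM (𝕜 := ℂ) X‖

namespace AMGM3

open scoped Matrix.Norms.L2Operator

/-- Real-analytic auxiliary: if `x^(2^(k+1)) ≤ K * c^(2^(k+1)-1)` for all `k`, then `x ≤ c`. -/
lemma real_aux (x c K : ℝ) (hc : 0 ≤ c)
    (h : ∀ k : ℕ, x ^ (2 ^ (k + 1)) ≤ K * c ^ (2 ^ (k + 1) - 1)) (hx : 0 ≤ x) : x ≤ c := by
  by_contra hlt
  push_neg at hlt
  have hx0 : 0 < x := lt_of_le_of_lt hc hlt
  rcases eq_or_lt_of_le hc with hc0 | hc0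
  · have h0 := h 0
    rw [← hc0] at h0
    norm_num at h0
    nlinarith
  · have hr : 1 < x / c := (one_lt_div hc0).mpr hlt
    obtain ⟨nn, hn⟩ := pow_unbounded_of_one_lt (K / c) hr
    have hle : nn ≤ 2 ^ (nn + 1) :=
      le_of_lt ((Nat.lt_two_pow_self (n := nn)).trans_le (Nat.pow_le_pow_right (by norm_num) (Nat.le_succ nn)))
    have h2 : (x / c) ^ nn ≤ (x / c) ^ (2 ^ (nn + 1)) := pow_le_pow_right₀ hr.le hle
    have h3 := h nn
    set mm := 2 ^ (nn + 1) with hmmdef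
    have hm1 : 1 ≤ mm := Nat.one_le_two_pow
    have hcc : c ^ (mm - 1) * c = c ^ mm := by
      rw [← pow_succ]
      congr 1
      omega
    have hcm : 0 < c ^ mm := pow_pos hc0 mm
    have hc0' : c ≠ 0 := ne_of_gt hc0
    have h4 : x ^ mm ≤ K / c * c ^ mm := by
      have e : K / c * c ^ mm = K * c ^ (mm - 1) := by
        rw [← hcc]
        field_simp
      rw [e]
      exact h3
    have h5 : (x / c) ^ mm ≤ K / c := by
      rw [div_pow]
      exact (div_le_iff₀ hcm).mpr h4
    linarith [h2.trans h5]

variable {d : ℕ}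

lemma opNorm_eq (X : Matrix (Fin d) (Fin d) ℂ) : opNorm X = ‖X‖ :=
  (Matrix.cstar_norm_def X).symm

lemma norm_mul_le' (X Y : Matrix (Fin d) (Fin d) ℂ) : ‖X * Y‖ ≤ ‖X‖ * ‖Y‖ :=
  Matrix.l2_opNorm_mul X Y

lemma norm_conjT (X : Matrix (Fin d) (Fin d) ℂ) : ‖Xᴴ‖ = ‖X‖ :=
  Matrix.l2_opNorm_conjTranspose X

lemma norm_herm_sq (X : Matrix (Fin d) (Fin d) ℂ) (h : Xᴴ = X) : ‖X * X‖ = ‖X‖ * ‖X‖ := by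
  have e : ‖X * X‖ = ‖Xᴴ * X‖ := by rw [h]
  rw [e, Matrix.l2_opNorm_conjTranspose_mul_self]

lemma norm_mul_conjT (X : Matrix (Fin d) (Fin d) ℂ) : ‖X * Xᴴ‖ = ‖X‖ * ‖X‖ := by
  have := Matrix.l2_opNorm_conjTranspose_mul_self Xᴴ
  rwa [conjTranspose_conjTranspose, norm_conjT] at this

lemma norm_pow_le1 (X : Matrix (Fin d) (Fin d) ℂ) : ∀ p : ℕ, 1 ≤ p → ‖X ^ p‖ ≤ ‖X‖ ^ p := by
  intro p
  induction p with
  | zero => omega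
  | succ q ih =>
    intro _
    rcases Nat.eq_zero_or_pos q with hq | hq
    · subst hq; simp
    · rw [pow_succ, pow_succ]
      calc ‖X ^ q * X‖ ≤ ‖X ^ q‖ * ‖X‖ := norm_mul_le' _ _
        _ ≤ ‖X‖ ^ q * ‖X‖ :=
          mul_le_mul_of_nonneg_right (ih hq) (norm_nonneg _)

lemma norm_herm_two_pow (X : Matrix (Fin d) (Fin d) ℂ) (h : Xᴴ = X) :
    ∀ k : ℕ, ‖X ^ (2 ^ k)‖ = ‖X‖ ^ (2 ^ k) := by
  intro k
  induction k with
  | zero => simp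
  | succ q ih =>
    have hY : (X ^ (2 ^ q))ᴴ = X ^ (2 ^ q) := by
      rw [conjTranspose_pow, h]
    have e : X ^ (2 ^ (q + 1)) = X ^ (2 ^ q) * X ^ (2 ^ q) := by
      rw [← pow_add]
      congr 1
      omega
    rw [e, norm_herm_sq _ hY, ih, ← pow_add]
    congr 1
    omega

lemma ABA_pow (A B : Matrix (Fin d) (Fin d) ℂ) :
    ∀ m : ℕ, (A * B * A) ^ (m + 1) = A * (B * (A * A)) ^ m * (B * A) := by
  intro m
  induction m with
  | zero => simp [mul_assoc]
  | succ q ih =>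
    rw [pow_succ, ih, pow_succ]
    simp only [mul_assoc]

/-- Key spectral-type inequality: for PSD `A, B`, `‖A*B*A‖ ≤ ‖B*(A*A)‖`. -/
lemma norm_ABA_le (A B : Matrix (Fin d) (Fin d) ℂ) (hA : A.PosSemidef) (hB : B.PosSemidef) :
    ‖A * B * A‖ ≤ ‖B * (A * A)‖ := by
  have hXh : (A * B * A)ᴴ = A * B * A := by
    rw [conjTranspose_mul, conjTranspose_mul, hA.1.eq, hB.1.eq, mul_assoc]
  apply real_aux _ _ (‖A‖ * (‖B‖ * ‖A‖)) (norm_nonneg _) _ (norm_nonneg _)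
  intro k
  have hm1 : 1 ≤ 2 ^ (k + 1) - 1 := by
    have := Nat.one_lt_two_pow (n := k + 1) (by omega)
    omega
  have hid : (A * B * A) ^ (2 ^ (k + 1)) = A * (B * (A * A)) ^ (2 ^ (k + 1) - 1) * (B * A) := by
    have := ABA_pow A B (2 ^ (k + 1) - 1)
    rwa [Nat.sub_add_cancel (by omega)] at this
  rw [← norm_herm_two_pow _ hXh (k + 1), hid]
  calc ‖A * (B * (A * A)) ^ (2 ^ (k + 1) - 1) * (B * A)‖
      ≤ ‖A * (B * (A * A)) ^ (2 ^ (k + 1) - 1)‖ * ‖B * A‖ := norm_mul_le' _ _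
    _ ≤ (‖A‖ * ‖(B * (A * A)) ^ (2 ^ (k + 1) - 1)‖) * ‖B * A‖ :=
        mul_le_mul_of_nonneg_right (norm_mul_le' _ _) (norm_nonneg _)
    _ ≤ (‖A‖ * ‖B * (A * A)‖ ^ (2 ^ (k + 1) - 1)) * (‖B‖ * ‖A‖) := by
        apply mul_le_mul
        · exact mul_le_mul_of_nonneg_left (norm_pow_le1 _ _ hm1) (norm_nonneg _)
        · exact norm_mul_le' _ _
        · exact norm_nonneg _
        · positivity
    _ = ‖A‖ * (‖B‖ * ‖A‖) * ‖B * (A * A)‖ ^ (2 ^ (k + 1) - 1) := by ring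

open scoped MatrixOrder in
/-- Splitting inequality: `‖A*B*C‖ ≤ (‖A*B*A‖ + ‖C*B*C‖)/2` for Hermitian `A, C` and PSD `B`. -/
lemma norm_ABC_le (A B C : Matrix (Fin d) (Fin d) ℂ) (hB : B.PosSemidef)
    (hA : Aᴴ = A) (hC : Cᴴ = C) :
    ‖A * B * C‖ ≤ (‖A * B * A‖ + ‖C * B * C‖) / 2 := by
  set S := CFC.sqrt B with hSdef
  have hSS : S * S = B := CFC.sqrt_mul_sqrt_self B (nonneg_iff_posSemidef.mpr hB)
  have hSh : Sᴴ = S := (nonneg_iff_posSemidef.mp (CFC.sqrt_nonneg B)).1.eq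
  have e : A * B * C = (A * S) * (S * C) := by
    rw [← hSS]
    simp only [mul_assoc]
  have ea : ‖(A * S) * (A * S)ᴴ‖ = ‖A * S‖ * ‖A * S‖ := norm_mul_conjT _
  have ea2 : (A * S) * (A * S)ᴴ = A * B * A := by
    rw [conjTranspose_mul, hSh, hA, ← hSS]
    simp only [mul_assoc]
  have ec : ‖(S * C)ᴴ * (S * C)‖ = ‖S * C‖ * ‖S * C‖ :=
    Matrix.l2_opNorm_conjTranspose_mul_self _
  have ec2 : (S * C)ᴴ * (S * C) = C * B * C := by
    rw [conjTranspose_mul, hSh, hC, ← hSS]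
    simp only [mul_assoc]
  have h1 : ‖A * B * C‖ ≤ ‖A * S‖ * ‖S * C‖ := by
    rw [e]
    exact norm_mul_le' _ _
  have h2 : ‖A * B * A‖ = ‖A * S‖ * ‖A * S‖ := by rw [← ea2]; exact ea
  have h3 : ‖C * B * C‖ = ‖S * C‖ * ‖S * C‖ := by rw [← ec2]; exact ec
  rw [h2, h3]
  nlinarith [sq_nonneg (‖A * S‖ - ‖S * C‖)]

/-- For Hermitian `A`, `‖A‖³ ≤ ‖A*A*A‖`. -/
lemma norm_cube (A : Matrix (Fin d) (Fin d) ℂ) (h : Aᴴ = A) : ‖A‖ ^ 3 ≤ ‖A * A * A‖ := by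
  rcases eq_or_lt_of_le (norm_nonneg A) with h0 | h0
  · rw [← h0]
    simpa using norm_nonneg (A * A * A)
  · have e2 : ‖A * A‖ = ‖A‖ * ‖A‖ := norm_herm_sq A h
    have hAA : (A * A)ᴴ = A * A := by rw [conjTranspose_mul, h]
    have e4 : ‖A * A * (A * A)‖ = (‖A‖ * ‖A‖) * (‖A‖ * ‖A‖) := by
      rw [norm_herm_sq _ hAA, e2]
    have e5 : A * A * (A * A) = A * (A * A * A) := by simp only [mul_assoc]
    have e6 : (‖A‖ * ‖A‖) * (‖A‖ * ‖A‖) ≤ ‖A‖ * ‖A * A * A‖ := by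
      rw [← e4, e5]
      exact norm_mul_le' _ _
    nlinarith [norm_nonneg (A * A * A)]

/-! ### Combinatorial summation lemmas -/

variable {n : ℕ}

lemma filter_not_one (i : Fin n) :
    univ.filter (fun k => ¬ k ≠ i) = {i} := by
  ext k; simp

lemma sum_split_one (i : Fin n) (f : Fin n → ℝ) :
    ∑ k, f k = (∑ k ∈ univ.filter (fun k => k ≠ i), f k) + f i := by
  rw [← Finset.sum_filter_add_sum_filter_not univ (fun k => k ≠ i) f, filter_not_one,
    Finset.sum_singleton]

lemma filter_not_two (i j : Fin n) (hij : j ≠ i) :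
    univ.filter (fun k => ¬ (k ≠ i ∧ k ≠ j)) = {i, j} := by
  ext k
  simp [not_and_or, or_comm]
  tauto

lemma sum_split_two (i j : Fin n) (hij : j ≠ i) (f : Fin n → ℝ) :
    ∑ k, f k = (∑ k ∈ univ.filter (fun k => k ≠ i ∧ k ≠ j), f k) + f i + f j := by
  rw [← Finset.sum_filter_add_sum_filter_not univ (fun k => k ≠ i ∧ k ≠ j) f,
    filter_not_two i j hij, Finset.sum_pair (Ne.symm hij), add_assoc]

lemma card_filter_one (i : Fin n) : (univ.filter (fun k => k ≠ i)).card = n - 1 := by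
  have : univ.filter (fun k => k ≠ i) = univ \ {i} := by ext k; simp
  rw [this, Finset.card_sdiff_of_subset (Finset.subset_univ _), Finset.card_singleton, Finset.card_univ,
    Fintype.card_fin]

lemma card_filter_two (i j : Fin n) (hij : j ≠ i) :
    (univ.filter (fun k => k ≠ i ∧ k ≠ j)).card = n - 2 := by
  have : univ.filter (fun k => k ≠ i ∧ k ≠ j) = univ \ {i, j} := by
    ext k; simp [not_or]
  rw [this, Finset.card_sdiff_of_subset (Finset.subset_univ _), Finset.card_pair (Ne.symm hij),
    Finset.card_univ, Fintype.card_fin]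

lemma sum_pair_swap (g : Fin n → Fin n → ℝ) :
    ∑ i, ∑ j ∈ univ.filter (fun j => j ≠ i), g i j
      = ∑ i, ∑ j ∈ univ.filter (fun j => j ≠ i), g j i := by
  simp only [Finset.sum_filter]
  rw [Finset.sum_comm]
  refine Finset.sum_congr rfl fun i _ => Finset.sum_congr rfl fun j _ => ?_
  exact if_congr ne_comm rfl rfl

lemma sum3_perm (f : Fin n → Fin n → Fin n → ℝ) :
    ∑ i, ∑ j, ∑ k, f i j k = ∑ k, ∑ j, ∑ i, f i j k :=
  calc ∑ i, ∑ j, ∑ k, f i j k = ∑ j, ∑ i, ∑ k, f i j k := Finset.sum_comm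
    _ = ∑ j, ∑ k, ∑ i, f i j k := Finset.sum_congr rfl fun _ _ => Finset.sum_comm
    _ = ∑ k, ∑ j, ∑ i, f i j k := Finset.sum_comm

lemma triple_to_ite (h : Fin n → Fin n → Fin n → ℝ) :
    (∑ i, ∑ j ∈ univ.filter (fun j => j ≠ i),
        ∑ k ∈ univ.filter (fun k => k ≠ i ∧ k ≠ j), h i j k)
      = ∑ i, ∑ j, ∑ k, if j ≠ i ∧ k ≠ i ∧ k ≠ j then h i j k else 0 := by
  simp only [Finset.sum_filter]
  refine Finset.sum_congr rfl fun i _ => Finset.sum_congr rfl fun j _ => ?_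
  split_ifs with hji
  · refine Finset.sum_congr rfl fun k _ => ?_
    simp [hji]
  · symm
    apply Finset.sum_eq_zero
    intro k _
    simp [hji]

lemma sum_triple_swap (g : Fin n → Fin n → ℝ) :
    (∑ i, ∑ j ∈ univ.filter (fun j => j ≠ i),
        ∑ k ∈ univ.filter (fun k => k ≠ i ∧ k ≠ j), g k j)
      = ∑ i, ∑ j ∈ univ.filter (fun j => j ≠ i),
          ∑ k ∈ univ.filter (fun k => k ≠ i ∧ k ≠ j), g i j := by
  rw [triple_to_ite, triple_to_ite]
  rw [sum3_perm (fun i j k => if j ≠ i ∧ k ≠ i ∧ k ≠ j then g k j else 0)]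
  refine Finset.sum_congr rfl fun i _ => Finset.sum_congr rfl fun j _ =>
    Finset.sum_congr rfl fun k _ => ?_
  refine if_congr ?_ rfl rfl
  constructor
  · rintro ⟨a, b, c⟩; exact ⟨c.symm, b.symm, a.symm⟩
  · rintro ⟨a, b, c⟩; exact ⟨c.symm, b.symm, a.symm⟩

end AMGM3

open AMGM3
open scoped Matrix.Norms.L2Operator

set_option maxHeartbeats 2000000 in
/-- **AMGM inequality for products of three matrices, operator norm** (Conjecture 1.3, case m=3).
For positive-semidefinite $A_1,\dots,A_n$,
$\frac{1}{n^3}\sum_{i,j,k} \|A_iA_jA_k\| \ge \frac{(n-3)!}{n!}\sum_{i,j,k \text{ distinct}} \|A_iA_jA_k\|$. -/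
theorem amgm_three_matrices_op_norm (d n : ℕ) (hd : 1 ≤ d) (hn : 3 ≤ n)
    (A : Fin n → Matrix (Fin d) (Fin d) ℂ) (hA : ∀ i, (A i).PosSemidef) :
    (1 / (n : ℝ) ^ 3) *
        ∑ i : Fin n, ∑ j : Fin n, ∑ k : Fin n, opNorm (A i * A j * A k) ≥
      ((Nat.factorial (n - 3) : ℝ) / (Nat.factorial n : ℝ)) *
        ∑ i : Fin n, ∑ j ∈ Finset.univ.filter (fun j => j ≠ i),
          ∑ k ∈ Finset.univ.filter (fun k => k ≠ i ∧ k ≠ j), opNorm (A i * A j * A k) := by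
  obtain ⟨m, rfl⟩ : ∃ m, n = m + 3 := ⟨n - 3, by omega⟩
  simp only [opNorm_eq]
  set S := ∑ i : Fin (m + 3), ∑ j ∈ univ.filter (fun j => j ≠ i),
      ∑ k ∈ univ.filter (fun k => k ≠ i ∧ k ≠ j), ‖A i * A j * A k‖ with hSdef
  set M := ∑ i : Fin (m + 3), ∑ j ∈ univ.filter (fun j => j ≠ i), ‖A i * A j * A i‖ with hMdef
  set P1 := ∑ i : Fin (m + 3), ∑ k ∈ univ.filter (fun k => k ≠ i), ‖A i * A i * A k‖ with hP1def
  set P2 := ∑ i : Fin (m + 3), ∑ j ∈ univ.filter (fun j => j ≠ i), ‖A i * A j * A j‖ with hP2def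
  set T := ∑ i : Fin (m + 3), ‖A i * A i * A i‖ with hTdef
  clear_value S M P1 P2 T
  -- decomposition of the full sum
  have key_i : ∀ i : Fin (m + 3), (∑ j, ∑ k, ‖A i * A j * A k‖)
      = (∑ j ∈ univ.filter (fun j => j ≠ i),
            ∑ k ∈ univ.filter (fun k => k ≠ i ∧ k ≠ j), ‖A i * A j * A k‖)
        + (∑ j ∈ univ.filter (fun j => j ≠ i), ‖A i * A j * A i‖)
        + (∑ j ∈ univ.filter (fun j => j ≠ i), ‖A i * A j * A j‖)
        + (∑ k ∈ univ.filter (fun k => k ≠ i), ‖A i * A i * A k‖)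
        + ‖A i * A i * A i‖ := by
    intro i
    rw [sum_split_one i (fun j => ∑ k, ‖A i * A j * A k‖)]
    rw [sum_split_one i (fun k => ‖A i * A i * A k‖)]
    have h2 : (∑ j ∈ univ.filter (fun j => j ≠ i), ∑ k, ‖A i * A j * A k‖)
        = ∑ j ∈ univ.filter (fun j => j ≠ i),
            ((∑ k ∈ univ.filter (fun k => k ≠ i ∧ k ≠ j), ‖A i * A j * A k‖)
              + ‖A i * A j * A i‖ + ‖A i * A j * A j‖) :=
      Finset.sum_congr rfl fun j hj => sum_split_two i j (Finset.mem_filter.mp hj).2 _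
    rw [h2, Finset.sum_add_distrib, Finset.sum_add_distrib]
    ring
  have hsum : (∑ i : Fin (m + 3), ∑ j, ∑ k, ‖A i * A j * A k‖) = S + M + P2 + P1 + T := by
    rw [Finset.sum_congr rfl fun i _ => key_i i]
    rw [Finset.sum_add_distrib, Finset.sum_add_distrib, Finset.sum_add_distrib,
      Finset.sum_add_distrib]
    rw [← hSdef, ← hMdef, ← hP2def, ← hP1def, ← hTdef]
  -- S ≤ (m+1) * M
  have hSle : S ≤ ((m : ℝ) + 1) * M := by
    have step1 : S ≤ ∑ i : Fin (m + 3), ∑ j ∈ univ.filter (fun j => j ≠ i),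
        ∑ k ∈ univ.filter (fun k => k ≠ i ∧ k ≠ j),
          (‖A i * A j * A i‖ + ‖A k * A j * A k‖) / 2 := by
      rw [hSdef]
      refine Finset.sum_le_sum fun i _ => Finset.sum_le_sum fun j _ =>
        Finset.sum_le_sum fun k _ => ?_
      exact norm_ABC_le (A i) (A j) (A k) (hA j) (hA i).1.eq (hA k).1.eq
    have e1 : (∑ i : Fin (m + 3), ∑ j ∈ univ.filter (fun j => j ≠ i),
        ∑ k ∈ univ.filter (fun k => k ≠ i ∧ k ≠ j),
          (‖A i * A j * A i‖ + ‖A k * A j * A k‖) / 2)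
        = ((∑ i : Fin (m + 3), ∑ j ∈ univ.filter (fun j => j ≠ i),
              ∑ k ∈ univ.filter (fun k => k ≠ i ∧ k ≠ j), ‖A i * A j * A i‖)
          + (∑ i : Fin (m + 3), ∑ j ∈ univ.filter (fun j => j ≠ i),
              ∑ k ∈ univ.filter (fun k => k ≠ i ∧ k ≠ j), ‖A k * A j * A k‖)) / 2 := by
      simp only [← Finset.sum_div, Finset.sum_add_distrib]
    have e2 : (∑ i : Fin (m + 3), ∑ j ∈ univ.filter (fun j => j ≠ i),
        ∑ k ∈ univ.filter (fun k => k ≠ i ∧ k ≠ j), ‖A i * A j * A i‖) = ((m : ℝ) + 1) * M := by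
      have inner : ∀ i : Fin (m + 3), ∀ j ∈ univ.filter (fun j => j ≠ i),
          (∑ _k ∈ univ.filter (fun k => k ≠ i ∧ k ≠ j), ‖A i * A j * A i‖)
            = ((m : ℝ) + 1) * ‖A i * A j * A i‖ := by
        intro i j hj
        rw [Finset.sum_const, card_filter_two i j (Finset.mem_filter.mp hj).2, nsmul_eq_mul,
          show m + 3 - 2 = m + 1 by omega]
        push_cast
        ring
      rw [Finset.sum_congr rfl fun i _ => Finset.sum_congr rfl (inner i)]
      simp only [← Finset.mul_sum]
      rw [← hMdef]
    have e3 : (∑ i : Fin (m + 3), ∑ j ∈ univ.filter (fun j => j ≠ i),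
        ∑ k ∈ univ.filter (fun k => k ≠ i ∧ k ≠ j), ‖A k * A j * A k‖) = ((m : ℝ) + 1) * M := by
      rw [sum_triple_swap (fun a b => ‖A a * A b * A a‖)]
      exact e2
    calc S ≤ _ := step1
      _ = _ := e1
      _ = (((m : ℝ) + 1) * M + ((m : ℝ) + 1) * M) / 2 := by rw [e2, e3]
      _ = ((m : ℝ) + 1) * M := by ring
  -- M ≤ P1
  have hMP1 : M ≤ P1 := by
    rw [hMdef, hP1def]
    refine Finset.sum_le_sum fun i _ => Finset.sum_le_sum fun j _ => ?_
    have h1 := norm_ABA_le (A i) (A j) (hA i) (hA j)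
    have e : (A j * (A i * A i))ᴴ = A i * A i * A j := by
      rw [conjTranspose_mul, conjTranspose_mul, (hA i).1.eq, (hA j).1.eq]
    have h2 : ‖A j * (A i * A i)‖ = ‖A i * A i * A j‖ := by
      rw [← e, norm_conjT]
    rw [← h2]
    exact h1
  -- M ≤ P2
  have hMP2 : M ≤ P2 := by
    rw [hMdef, hP2def]
    rw [sum_pair_swap (fun a b => ‖A a * A b * A a‖)]
    refine Finset.sum_le_sum fun i _ => Finset.sum_le_sum fun j _ => ?_
    have h1 := norm_ABA_le (A j) (A i) (hA j) (hA i)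
    have h2 : A i * (A j * A j) = A i * A j * A j := (mul_assoc _ _ _).symm
    rwa [h2] at h1
  -- M ≤ (m+2) * T
  have hMT : M ≤ ((m : ℝ) + 2) * T := by
    have term : ∀ i j : Fin (m + 3),
        ‖A i * A j * A i‖ ≤ (2 * ‖A i * A i * A i‖ + ‖A j * A j * A j‖) / 3 := by
      intro i j
      have h1 : ‖A i * A j * A i‖ ≤ ‖A i‖ * ‖A j‖ * ‖A i‖ := by
        calc ‖A i * A j * A i‖ ≤ ‖A i * A j‖ * ‖A i‖ := norm_mul_le' _ _
          _ ≤ ‖A i‖ * ‖A j‖ * ‖A i‖ :=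
            mul_le_mul_of_nonneg_right (norm_mul_le' _ _) (norm_nonneg _)
      have h2 := norm_cube (A i) (hA i).1.eq
      have h3 := norm_cube (A j) (hA j).1.eq
      have h4 : ‖A i‖ * ‖A j‖ * ‖A i‖ ≤ (2 * ‖A i‖ ^ 3 + ‖A j‖ ^ 3) / 3 := by
        nlinarith [norm_nonneg (A i), norm_nonneg (A j), sq_nonneg (‖A i‖ - ‖A j‖),
          mul_nonneg (mul_nonneg (norm_nonneg (A i)) (norm_nonneg (A i))) (norm_nonneg (A j))]
      linarith
    have c1 : (∑ i : Fin (m + 3), ∑ j ∈ univ.filter (fun j => j ≠ i), ‖A i * A i * A i‖)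
        = ((m : ℝ) + 2) * T := by
      have inner : ∀ i : Fin (m + 3),
          (∑ _j ∈ univ.filter (fun j => j ≠ i), ‖A i * A i * A i‖)
            = ((m : ℝ) + 2) * ‖A i * A i * A i‖ := by
        intro i
        rw [Finset.sum_const, card_filter_one i, nsmul_eq_mul, show m + 3 - 1 = m + 2 by omega]
        push_cast
        ring
      rw [Finset.sum_congr rfl fun i _ => inner i, ← Finset.mul_sum, ← hTdef]
    have c2 : (∑ i : Fin (m + 3), ∑ j ∈ univ.filter (fun j => j ≠ i), ‖A j * A j * A j‖)
        = ((m : ℝ) + 2) * T := by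
      rw [sum_pair_swap (fun a b => ‖A b * A b * A b‖)]
      exact c1
    rw [hMdef]
    calc (∑ i : Fin (m + 3), ∑ j ∈ univ.filter (fun j => j ≠ i), ‖A i * A j * A i‖)
        ≤ ∑ i : Fin (m + 3), ∑ j ∈ univ.filter (fun j => j ≠ i),
            (2 * ‖A i * A i * A i‖ + ‖A j * A j * A j‖) / 3 :=
          Finset.sum_le_sum fun i _ => Finset.sum_le_sum fun j _ => term i j
      _ = (2 * (∑ i : Fin (m + 3), ∑ j ∈ univ.filter (fun j => j ≠ i), ‖A i * A i * A i‖)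
            + (∑ i : Fin (m + 3), ∑ j ∈ univ.filter (fun j => j ≠ i), ‖A j * A j * A j‖)) / 3 := by
          simp only [← Finset.sum_div, Finset.sum_add_distrib, ← Finset.mul_sum]
      _ = (2 * (((m : ℝ) + 2) * T) + ((m : ℝ) + 2) * T) / 3 := by rw [c1, c2]
      _ = ((m : ℝ) + 2) * T := by ring
  -- nonnegativity
  have hSnn : 0 ≤ S := by
    rw [hSdef]
    exact Finset.sum_nonneg fun i _ => Finset.sum_nonneg fun j _ =>
      Finset.sum_nonneg fun k _ => norm_nonneg _
  have hMnn : 0 ≤ M := by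
    rw [hMdef]
    exact Finset.sum_nonneg fun i _ => Finset.sum_nonneg fun j _ => norm_nonneg _
  have hP1nn : 0 ≤ P1 := by
    rw [hP1def]
    exact Finset.sum_nonneg fun i _ => Finset.sum_nonneg fun j _ => norm_nonneg _
  have hP2nn : 0 ≤ P2 := by
    rw [hP2def]
    exact Finset.sum_nonneg fun i _ => Finset.sum_nonneg fun j _ => norm_nonneg _
  have hTnn : 0 ≤ T := by
    rw [hTdef]
    exact Finset.sum_nonneg fun i _ => norm_nonneg _
  -- arithmetic conclusion
  rw [hsum]
  simp only [Nat.add_sub_cancel]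
  have hfact : (((m + 3).factorial : ℕ) : ℝ)
      = ((m : ℝ) + 3) * ((m : ℝ) + 2) * ((m : ℝ) + 1) * ((m.factorial : ℕ) : ℝ) := by
    rw [show m + 3 = m + 2 + 1 from rfl, Nat.factorial_succ,
      show m + 2 = m + 1 + 1 from rfl, Nat.factorial_succ, Nat.factorial_succ]
    push_cast
    ring
  rw [hfact]
  have h1p : (0 : ℝ) < (m : ℝ) + 1 := by positivity
  have h2p : (0 : ℝ) < (m : ℝ) + 2 := by positivity
  have h3p : (0 : ℝ) < (m : ℝ) + 3 := by positivity
  have hfpos : (0 : ℝ) < ((m.factorial : ℕ) : ℝ) := by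
    exact_mod_cast Nat.factorial_pos m
  have hcoef : ((m.factorial : ℕ) : ℝ)
      / (((m : ℝ) + 3) * ((m : ℝ) + 2) * ((m : ℝ) + 1) * ((m.factorial : ℕ) : ℝ))
      = 1 / (((m : ℝ) + 3) * ((m : ℝ) + 2) * ((m : ℝ) + 1)) := by
    field_simp
  rw [hcoef]
  have hcast : ((m + 3 : ℕ) : ℝ) = (m : ℝ) + 3 := by push_cast; ring
  rw [hcast]
  rw [ge_iff_le, one_div_mul_eq_div, one_div_mul_eq_div,
    div_le_div_iff₀ (mul_pos (mul_pos h3p h2p) h1p) (pow_pos h3p 3)]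
  have E1 : ((m : ℝ) + 3) * ((3 * (m : ℝ) + 7) * S)
      ≤ ((m : ℝ) + 3) * ((3 * (m : ℝ) + 7) * (((m : ℝ) + 1) * M)) := by
    apply mul_le_mul_of_nonneg_left _ h3p.le
    apply mul_le_mul_of_nonneg_left hSle (by positivity)
  have E2 : (((m : ℝ) + 1) * ((m : ℝ) + 2) * ((m : ℝ) + 3)) * M
      ≤ (((m : ℝ) + 1) * ((m : ℝ) + 2) * ((m : ℝ) + 3)) * P1 :=
    mul_le_mul_of_nonneg_left hMP1 (by positivity)
  have E3 : (((m : ℝ) + 1) * ((m : ℝ) + 2) * ((m : ℝ) + 3)) * M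
      ≤ (((m : ℝ) + 1) * ((m : ℝ) + 2) * ((m : ℝ) + 3)) * P2 :=
    mul_le_mul_of_nonneg_left hMP2 (by positivity)
  have E4 : (((m : ℝ) + 1) * ((m : ℝ) + 3)) * M
      ≤ (((m : ℝ) + 1) * ((m : ℝ) + 3)) * (((m : ℝ) + 2) * T) :=
    mul_le_mul_of_nonneg_left hMT (by positivity)
  nlinarith [E1, E2, E3, E4]
end

section
/- Let N be a unitarily invariant norm on M(d). If X₁, X₃ ∈ M(d) are Hermitian and X₂ ∈ M(d) is positive-semidefinite, then N(X₁ X₂ X₃) ≤ (1/2)·N(X₁ X₂ X₁) + (1/2)·N(X₃ X₂ X₃). -/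
open Matrix Finset
open scoped ComplexOrder
open scoped MatrixOrder

section Aux

variable {d : ℕ}

private lemma uins_smul_psd {M : Matrix (Fin d) (Fin d) ℂ} {c : ℝ} (hc : 0 ≤ c)
    (hM : M.PosSemidef) : ((c : ℂ) • M).PosSemidef := by
  refine Matrix.PosSemidef.of_dotProduct_mulVec_nonneg ?_ ?_
  · unfold Matrix.IsHermitian
    rw [Matrix.conjTranspose_smul, hM.1.eq]
    congr 1
    simp [Complex.star_def, Complex.conj_ofReal]
  · intro x
    rw [Matrix.smul_mulVec, dotProduct_smul]
    exact smul_nonneg (by exact_mod_cast Complex.zero_le_real.mpr hc) (hM.dotProduct_mulVec_nonneg x)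

private lemma uins_smul_posdef {M : Matrix (Fin d) (Fin d) ℂ} {c : ℝ} (hc : 0 < c)
    (hM : M.PosDef) : ((c : ℂ) • M).PosDef := by
  refine Matrix.PosDef.of_dotProduct_mulVec_pos ?_ ?_
  · unfold Matrix.IsHermitian
    rw [Matrix.conjTranspose_smul, hM.1.eq]
    congr 1
    simp [Complex.star_def, Complex.conj_ofReal]
  · intro x hx
    rw [Matrix.smul_mulVec, dotProduct_smul]
    have h1 : (0:ℂ) < (c:ℂ) := by exact_mod_cast Complex.real_lt_real.mpr hc
    have := hM.dotProduct_mulVec_pos hx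
    calc (0:ℂ) = (c:ℂ) • (0:ℂ) := by simp
    _ < (c:ℂ) • (dotProduct (star x) (M *ᵥ x)) := by
        rw [smul_eq_mul, smul_eq_mul, mul_zero]
        exact mul_pos h1 this

/-- eigenvalues of a PSD matrix `M` with `1 - M*M` PSD are at most 1. -/
private lemma uins_eig_le {M : Matrix (Fin d) (Fin d) ℂ} (hM : M.PosSemidef)
    (h1 : (1 - M * M).PosSemidef) (i : Fin d) : hM.1.eigenvalues i ≤ 1 := by
  set v := hM.1.eigenvectorBasis i with hv
  have hMv : M *ᵥ ⇑v = hM.1.eigenvalues i • ⇑v := hM.1.mulVec_eigenvectorBasis i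
  have hvv : dotProduct (star ⇑v) ⇑v = 1 := by
    rw [dotProduct_comm, ← EuclideanSpace.inner_eq_star_dotProduct]
    simp [inner_self_eq_norm_sq_to_K, hv, hM.1.eigenvectorBasis.orthonormal.1 i]
  have h0 := h1.dotProduct_mulVec_nonneg ⇑v
  rw [sub_mulVec, one_mulVec, dotProduct_sub, hvv, ← mulVec_mulVec, hMv, mulVec_smul, hMv,
    smul_smul, dotProduct_smul, hvv] at h0
  rw [Complex.real_smul, mul_one] at h0
  have h2 : (0:ℂ) ≤ ((1 - hM.1.eigenvalues i * hM.1.eigenvalues i : ℝ) : ℂ) := by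
    push_cast
    convert h0 using 2
    push_cast; ring
  have h3 : (0:ℝ) ≤ 1 - hM.1.eigenvalues i * hM.1.eigenvalues i := by
    exact_mod_cast h2
  nlinarith [hM.eigenvalues_nonneg i]

/-- A PSD contraction is the real part of a unitary. -/
private lemma uins_halfUnitary {M : Matrix (Fin d) (Fin d) ℂ} (hM : M.PosSemidef)
    (h1 : (1 - M * M).PosSemidef) :
    ∃ V ∈ Matrix.unitaryGroup (Fin d) ℂ, M = (1/2 : ℂ) • (V + Vᴴ) := by
  have hle : ∀ i, hM.1.eigenvalues i ≤ 1 := uins_eig_le hM h1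
  set lam := hM.1.eigenvalues with hlam
  set U := (hM.1.eigenvectorUnitary : Matrix (Fin d) (Fin d) ℂ) with hU
  set e : Fin d → ℂ := fun i => (lam i : ℂ) + (Real.sqrt (1 - lam i ^ 2) : ℂ) * Complex.I with he
  have hstar : ∀ i, star (e i) * e i = 1 := by
    intro i
    have h1 : (0:ℝ) ≤ 1 - lam i ^ 2 := by nlinarith [hM.eigenvalues_nonneg i, hle i]
    have h2 : (Real.sqrt (1 - lam i ^ 2) : ℝ) ^ 2 = 1 - lam i ^ 2 := Real.sq_sqrt h1
    have key : star (e i) * e i = ((lam i:ℂ))^2 + ((Real.sqrt (1 - lam i^2):ℝ):ℂ)^2 := by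
      simp only [he, star_add, star_mul', Complex.star_def, Complex.conj_ofReal, Complex.conj_I]
      ring_nf
      rw [Complex.I_sq]
      ring
    rw [key, ← Complex.ofReal_pow, ← Complex.ofReal_pow, h2]
    push_cast
    ring
  have hDg : diagonal e ∈ Matrix.unitaryGroup (Fin d) ℂ := by
    rw [Matrix.mem_unitaryGroup_iff', Matrix.star_eq_conjTranspose,
      Matrix.diagonal_conjTranspose, diagonal_mul_diagonal, ← Matrix.diagonal_one,
      diagonal_eq_diagonal_iff]
    intro i
    exact hstar i
  refine ⟨U * diagonal e * star U, ?_, ?_⟩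
  · exact mul_mem (mul_mem hM.1.eigenvectorUnitary.2 hDg)
      (Unitary.star_mem hM.1.eigenvectorUnitary.2)
  · have hVH : (U * diagonal e * star U)ᴴ = U * diagonal (fun i => star (e i)) * star U := by
      rw [← Matrix.star_eq_conjTranspose]
      simp only [StarMul.star_mul, star_star]
      rw [mul_assoc, Matrix.star_eq_conjTranspose (diagonal e), Matrix.diagonal_conjTranspose]
      rfl
    rw [hVH]
    have hsplit : diagonal (fun i => e i + star (e i))
        = diagonal e + diagonal (fun i => star (e i)) :=
      (Matrix.diagonal_add _ _).symm
    have : U * diagonal e * star U + U * diagonal (fun i => star (e i)) * star U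
        = U * diagonal (fun i => e i + star (e i)) * star U := by
      rw [hsplit, mul_add, add_mul]
    rw [this]
    have heRe : (fun i => e i + star (e i)) = fun i => (2 * lam i : ℂ) := by
      funext i
      simp only [he, star_add, star_mul', Complex.star_def, Complex.conj_ofReal, Complex.conj_I]
      ring
    rw [heRe]
    have : (fun i => (2 * lam i : ℂ)) = fun i => (2:ℂ) * ((RCLike.ofReal ∘ lam) i) := by
      funext i; simp
    rw [this]
    have hdiag2 : diagonal (fun i => (2:ℂ) * ((RCLike.ofReal ∘ lam) i))
        = (2:ℂ) • diagonal (RCLike.ofReal ∘ lam) := by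
      rw [← Matrix.diagonal_smul]
      rfl
    rw [hdiag2]
    rw [Matrix.mul_smul, Matrix.smul_mul, smul_smul]
    norm_num
    exact hM.1.spectral_theorem

/-- Polar decomposition of an invertible matrix. -/
private lemma uins_polar {T : Matrix (Fin d) (Fin d) ℂ} (hT : IsUnit T.det) :
    ∃ U ∈ Matrix.unitaryGroup (Fin d) ℂ, ∃ P : Matrix (Fin d) (Fin d) ℂ,
      P.PosSemidef ∧ T = U * P := by
  have hTT : (Tᴴ * T).PosSemidef := Matrix.posSemidef_conjTranspose_mul_self T
  set P := CFC.sqrt (Tᴴ * T) with hPdef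
  have hP : P.PosSemidef := (CFC.sqrt_nonneg (Tᴴ * T)).posSemidef
  have hPP : P * P = Tᴴ * T := CFC.sqrt_mul_sqrt_self (Tᴴ * T) hTT.nonneg
  have hdet : IsUnit P.det := by
    have h1 : P.det * P.det = Tᴴ.det * T.det := by rw [← Matrix.det_mul, ← Matrix.det_mul, hPP]
    rw [isUnit_iff_ne_zero]
    intro h0
    rw [h0, mul_zero] at h1
    have : Tᴴ.det * T.det ≠ 0 := by
      apply mul_ne_zero _ (isUnit_iff_ne_zero.mp hT)
      rw [Matrix.det_conjTranspose]
      simpa using (isUnit_iff_ne_zero.mp hT)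
    exact this h1.symm
  have hPiH : (P⁻¹)ᴴ = P⁻¹ := by rw [Matrix.conjTranspose_nonsing_inv, hP.1.eq]
  have hPPi : P * P⁻¹ = 1 := Matrix.mul_nonsing_inv _ hdet
  have hPiP : P⁻¹ * P = 1 := Matrix.nonsing_inv_mul _ hdet
  refine ⟨T * P⁻¹, ?_, P, hP, ?_⟩
  · rw [Matrix.mem_unitaryGroup_iff', Matrix.star_eq_conjTranspose, Matrix.conjTranspose_mul,
      hPiH]
    calc P⁻¹ * Tᴴ * (T * P⁻¹) = P⁻¹ * (Tᴴ * T) * P⁻¹ := by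
          rw [mul_assoc, mul_assoc, mul_assoc]
    _ = P⁻¹ * (P * P) * P⁻¹ := by rw [hPP]
    _ = (P⁻¹ * P) * (P * P⁻¹) := by rw [← mul_assoc, mul_assoc (P⁻¹ * P) P P⁻¹, ← mul_assoc]
    _ = 1 := by rw [hPiP, hPPi, one_mul]
  · rw [mul_assoc, hPiP, mul_one]

end Aux

section NormAux

variable {d : ℕ} {N : Matrix (Fin d) (Fin d) ℂ → ℝ}

private lemma uins_conj
    (hN_unitary : ∀ U : Matrix (Fin d) (Fin d) ℂ, U ∈ Matrix.unitaryGroup (Fin d) ℂ →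
      ∀ X, N (U * X) = N X ∧ N (X * U) = N X)
    {U : Matrix (Fin d) (Fin d) ℂ} (hU : U ∈ Matrix.unitaryGroup (Fin d) ℂ)
    (X : Matrix (Fin d) (Fin d) ℂ) : N (star U * X * U) = N X := by
  rw [mul_assoc, (hN_unitary (star U) (Unitary.star_mem hU) (X * U)).1,
    (hN_unitary U hU X).2]

private lemma uins_conj' (hN_unitary : ∀ U : Matrix (Fin d) (Fin d) ℂ,
      U ∈ Matrix.unitaryGroup (Fin d) ℂ → ∀ X, N (U * X) = N X ∧ N (X * U) = N X)
    {U : Matrix (Fin d) (Fin d) ℂ} (hU : U ∈ Matrix.unitaryGroup (Fin d) ℂ)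
    (X : Matrix (Fin d) (Fin d) ℂ) : N (U * X * star U) = N X := by
  rw [mul_assoc, (hN_unitary U hU (X * star U)).1,
    (hN_unitary (star U) (Unitary.star_mem hU) X).2]

/-- Two-sided multiplication by a PSD contraction does not increase the norm. -/
private lemma uins_contraction
    (hN_smul : ∀ (c : ℂ) (X : Matrix (Fin d) (Fin d) ℂ), N (c • X) = ‖c‖ * N X)
    (hN_add : ∀ X Y, N (X + Y) ≤ N X + N Y)
    (hN_unitary : ∀ U : Matrix (Fin d) (Fin d) ℂ, U ∈ Matrix.unitaryGroup (Fin d) ℂ →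
      ∀ X, N (U * X) = N X ∧ N (X * U) = N X)
    {M : Matrix (Fin d) (Fin d) ℂ} (hM : M.PosSemidef) (h1 : (1 - M * M).PosSemidef)
    (X : Matrix (Fin d) (Fin d) ℂ) : N (M * X * M) ≤ N X := by
  obtain ⟨V, hV, hMV⟩ := uins_halfUnitary hM h1
  have hV' : star V ∈ Matrix.unitaryGroup (Fin d) ℂ := Unitary.star_mem hV
  have hexp : M * X * M = (1/4 : ℂ) • (V * X * V + V * X * Vᴴ + Vᴴ * X * V + Vᴴ * X * Vᴴ) := by
    rw [hMV]
    simp only [Matrix.smul_mul, Matrix.mul_smul, Matrix.add_mul, Matrix.mul_add]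
    module
  rw [hexp, hN_smul]
  have habs : ‖(1/4 : ℂ)‖ = 1/4 := by norm_num
  rw [habs]
  have hsV : Vᴴ = star V := rfl
  have e1 : N (V * X * V) = N X := by
    rw [mul_assoc, (hN_unitary V hV (X * V)).1, (hN_unitary V hV X).2]
  have e2 : N (V * X * Vᴴ) = N X := by rw [hsV]; exact uins_conj' hN_unitary hV X
  have e3 : N (Vᴴ * X * V) = N X := by rw [hsV]; exact uins_conj hN_unitary hV X
  have e4 : N (Vᴴ * X * Vᴴ) = N X := by
    rw [hsV, mul_assoc, (hN_unitary (star V) hV' (X * star V)).1,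
      (hN_unitary (star V) hV' X).2]
  have t1 : N (V * X * V + V * X * Vᴴ + Vᴴ * X * V + Vᴴ * X * Vᴴ) ≤ 4 * N X := by
    calc N (V * X * V + V * X * Vᴴ + Vᴴ * X * V + Vᴴ * X * Vᴴ)
        ≤ N (V * X * V + V * X * Vᴴ + Vᴴ * X * V) + N (Vᴴ * X * Vᴴ) := hN_add _ _
    _ ≤ N (V * X * V + V * X * Vᴴ) + N (Vᴴ * X * V) + N (Vᴴ * X * Vᴴ) := by
        have := hN_add (V * X * V + V * X * Vᴴ) (Vᴴ * X * V)
        linarith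
    _ ≤ N (V * X * V) + N (V * X * Vᴴ) + N (Vᴴ * X * V) + N (Vᴴ * X * Vᴴ) := by
        have := hN_add (V * X * V) (V * X * Vᴴ)
        linarith
    _ = 4 * N X := by rw [e1, e2, e3, e4]; ring
  linarith

/-- Monotonicity for strictly positive matrices. -/
private lemma uins_mono_posdef
    (hN_smul : ∀ (c : ℂ) (X : Matrix (Fin d) (Fin d) ℂ), N (c • X) = ‖c‖ * N X)
    (hN_add : ∀ X Y, N (X + Y) ≤ N X + N Y)
    (hN_unitary : ∀ U : Matrix (Fin d) (Fin d) ℂ, U ∈ Matrix.unitaryGroup (Fin d) ℂ →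
      ∀ X, N (U * X) = N X ∧ N (X * U) = N X)
    {A B : Matrix (Fin d) (Fin d) ℂ} (hA : A.PosDef) (hB : B.PosDef)
    (hAB : (B - A).PosSemidef) : N A ≤ N B := by
  set Bs := CFC.sqrt B with hBsdef
  have hBs : Bs.PosSemidef := (CFC.sqrt_nonneg B).posSemidef
  have hBsBs : Bs * Bs = B := CFC.sqrt_mul_sqrt_self B hB.posSemidef.nonneg
  have hdetBs : IsUnit Bs.det := by
    rw [isUnit_iff_ne_zero]
    intro h0
    have h1 : Bs.det * Bs.det = B.det := by rw [← Matrix.det_mul, hBsBs]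
    rw [h0, mul_zero] at h1
    exact hB.det_pos.ne' h1.symm
  set Bsi := Bs⁻¹ with hBsidef
  have hBsiH : Bsiᴴ = Bsi := by rw [hBsidef, Matrix.conjTranspose_nonsing_inv, hBs.1.eq]
  have hBsBsi : Bs * Bsi = 1 := Matrix.mul_nonsing_inv _ hdetBs
  have hBsiBs : Bsi * Bs = 1 := Matrix.nonsing_inv_mul _ hdetBs
  set K := Bsi * A * Bsi with hKdef
  have hK : K.PosSemidef := by
    have := hA.posSemidef.conjTranspose_mul_mul_same Bsi
    rwa [hBsiH] at this
  have hBid : Bsi * B * Bsi = 1 := by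
    rw [← hBsBs]
    simp only [← mul_assoc]
    rw [hBsiBs, one_mul, hBsBsi]
  have h1K : (1 - K).PosSemidef := by
    have h := hAB.conjTranspose_mul_mul_same Bsi
    rw [hBsiH] at h
    have heq : Bsi * (B - A) * Bsi = 1 - K := by
      rw [Matrix.mul_sub, Matrix.sub_mul, hBid, hKdef]
    rwa [heq] at h
  set M := CFC.sqrt K with hMdef
  have hM : M.PosSemidef := (CFC.sqrt_nonneg K).posSemidef
  have hMM : M * M = K := CFC.sqrt_mul_sqrt_self K hK.nonneg
  have h1MM : (1 - M * M).PosSemidef := by rw [hMM]; exact h1K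
  set C := M * Bs with hCdef
  have hCH : Cᴴ = Bs * M := by rw [hCdef, Matrix.conjTranspose_mul, hBs.1.eq, hM.1.eq]
  have hCHC : Cᴴ * C = A := by
    rw [hCH, hCdef]
    simp only [← mul_assoc]
    rw [mul_assoc Bs M M, hMM, hKdef]
    simp only [← mul_assoc]
    rw [hBsBsi, one_mul, mul_assoc, hBsiBs, mul_one]
  -- polar-type unitary
  set sA := CFC.sqrt A with hsAdef
  have hsA : sA.PosSemidef := (CFC.sqrt_nonneg A).posSemidef
  have hsAsA : sA * sA = A := CFC.sqrt_mul_sqrt_self A hA.posSemidef.nonneg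
  have hdetsA : IsUnit sA.det := by
    rw [isUnit_iff_ne_zero]
    intro h0
    have h1 : sA.det * sA.det = A.det := by rw [← Matrix.det_mul, hsAsA]
    rw [h0, mul_zero] at h1
    exact hA.det_pos.ne' h1.symm
  have hsAiH : (sA⁻¹)ᴴ = sA⁻¹ := by rw [Matrix.conjTranspose_nonsing_inv, hsA.1.eq]
  have hsAsAi : sA * sA⁻¹ = 1 := Matrix.mul_nonsing_inv _ hdetsA
  have hsAisA : sA⁻¹ * sA = 1 := Matrix.nonsing_inv_mul _ hdetsA
  set Uu := C * sA⁻¹ with hUudef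
  have hUu : Uu ∈ Matrix.unitaryGroup (Fin d) ℂ := by
    rw [Matrix.mem_unitaryGroup_iff', Matrix.star_eq_conjTranspose, hUudef,
      Matrix.conjTranspose_mul, hsAiH]
    simp only [← mul_assoc]
    rw [mul_assoc (sA⁻¹) Cᴴ C, hCHC, ← hsAsA]
    simp only [← mul_assoc]
    rw [hsAisA, one_mul, hsAsAi]
  have hC : Uu * sA = C := by rw [hUudef, mul_assoc, hsAisA, mul_one]
  have hCCH : C * Cᴴ = Uu * A * star Uu := by
    rw [← hC, Matrix.star_eq_conjTranspose, Matrix.conjTranspose_mul, hsA.1.eq]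
    simp only [← mul_assoc]
    rw [mul_assoc Uu sA sA, hsAsA]
  have hCCH' : C * Cᴴ = M * B * M := by
    rw [hCH, hCdef]
    simp only [← mul_assoc]
    rw [mul_assoc M Bs Bs, hBsBs]
  have key : N A = N (M * B * M) := by
    rw [← hCCH', hCCH, uins_conj' hN_unitary hUu A]
  rw [key]
  exact uins_contraction hN_smul hN_add hN_unitary hM h1MM B

/-- Monotonicity: `0 ≤ A ≤ B` implies `N A ≤ N B`. -/
private lemma uins_mono
    (hN_nonneg : ∀ X, 0 ≤ N X)
    (hN_smul : ∀ (c : ℂ) (X : Matrix (Fin d) (Fin d) ℂ), N (c • X) = ‖c‖ * N X)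
    (hN_add : ∀ X Y, N (X + Y) ≤ N X + N Y)
    (hN_unitary : ∀ U : Matrix (Fin d) (Fin d) ℂ, U ∈ Matrix.unitaryGroup (Fin d) ℂ →
      ∀ X, N (U * X) = N X ∧ N (X * U) = N X)
    {A B : Matrix (Fin d) (Fin d) ℂ} (hA : A.PosSemidef) (hB : B.PosSemidef)
    (hAB : (B - A).PosSemidef) : N A ≤ N B := by
  have hsub : ∀ X Y : Matrix (Fin d) (Fin d) ℂ, N (X - Y) ≤ N X + N Y := by
    intro X Y
    have h1 : X - Y = X + (-1:ℂ) • Y := by module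
    have h2 : N ((-1:ℂ) • Y) = N Y := by rw [hN_smul (-1:ℂ) Y]; simp
    calc N (X - Y) = N (X + (-1:ℂ) • Y) := by rw [← h1]
    _ ≤ N X + N ((-1:ℂ) • Y) := hN_add _ _
    _ = N X + N Y := by rw [h2]
  refine le_of_forall_pos_le_add fun δ hδ => ?_
  set K0 : ℝ := 2 * N B + 3 * N 1 + 1 with hK0def
  have hK0 : 0 < K0 := by
    have := hN_nonneg B; have := hN_nonneg 1
    positivity
  set ε : ℝ := min 1 (δ / K0) with hεdef
  have hε : 0 < ε := lt_min one_pos (div_pos hδ hK0)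
  have hε1 : ε ≤ 1 := min_le_left _ _
  have hεK : ε * K0 ≤ δ := by
    have h1 : ε ≤ δ / K0 := min_le_right _ _
    calc ε * K0 ≤ (δ / K0) * K0 := by nlinarith
    _ = δ := by field_simp
  have hε0 : (0:ℝ) < 1 + ε := by linarith
  set r : ℝ := (1 + ε)⁻¹ with hrdef
  have hr : 0 < r := by positivity
  have hrc : (r:ℂ) * (1 + (ε:ℂ)) = 1 := by
    have h1 : r * (1 + ε) = 1 := by rw [hrdef]; exact inv_mul_cancel₀ hε0.ne'
    calc (r:ℂ) * (1 + (ε:ℂ)) = ((r * (1+ε) : ℝ) : ℂ) := by push_cast; ring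
    _ = 1 := by rw [h1]; norm_num
  obtain ⟨Bε, hBεdef⟩ : ∃ X : Matrix (Fin d) (Fin d) ℂ, X = B + (ε:ℂ) • 1 := ⟨_, rfl⟩
  obtain ⟨Aε, hAεdef⟩ : ∃ X : Matrix (Fin d) (Fin d) ℂ, X = (r:ℂ) • (A + (ε:ℂ) • Bε) := ⟨_, rfl⟩
  have hBε : Bε.PosDef := by
    rw [hBεdef]
    exact Matrix.PosDef.posSemidef_add hB (uins_smul_posdef hε Matrix.PosDef.one)
  have hAε : Aε.PosDef := by
    rw [hAεdef]
    exact uins_smul_posdef hr (Matrix.PosDef.posSemidef_add hA (uins_smul_posdef hε hBε))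
  have hBAε : (Bε - Aε).PosSemidef := by
    have hs : (1:ℂ) - (r:ℂ) * (ε:ℂ) = (r:ℂ) := by linear_combination -hrc
    have h2 : (B - A) + (ε:ℂ) • (1 : Matrix (Fin d) (Fin d) ℂ) = Bε - A := by
      rw [hBεdef]; abel
    have heq : Bε - Aε = (r:ℂ) • ((B - A) + (ε:ℂ) • (1 : Matrix (Fin d) (Fin d) ℂ)) := by
      rw [h2, hAεdef, smul_add, smul_smul, smul_sub]
      calc Bε - ((r:ℂ) • A + ((r:ℂ) * (ε:ℂ)) • Bε)
          = (Bε - ((r:ℂ) * (ε:ℂ)) • Bε) - (r:ℂ) • A := by abel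
      _ = ((1:ℂ) - (r:ℂ) * (ε:ℂ)) • Bε - (r:ℂ) • A := by rw [sub_smul, one_smul]
      _ = (r:ℂ) • Bε - (r:ℂ) • A := by rw [hs]
    rw [heq]
    exact uins_smul_psd hr.le (hAB.add (uins_smul_psd hε.le Matrix.PosSemidef.one))
  have hmain : N Aε ≤ N Bε := uins_mono_posdef hN_smul hN_add hN_unitary hAε hBε hBAε
  have hA_eq : A = ((1+ε:ℝ):ℂ) • Aε - (ε:ℂ) • Bε := by
    have hx : ((1+ε:ℝ):ℂ) * (r:ℂ) = 1 := by push_cast; linear_combination hrc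
    rw [hAεdef, smul_smul, hx, one_smul]
    abel
  have hNBε : N Bε ≤ N B + ε * N 1 := by
    have h2 : N ((ε:ℂ) • (1 : Matrix (Fin d) (Fin d) ℂ)) = ε * N 1 := by
      rw [hN_smul ((ε:ℂ)) 1, Complex.norm_real, Real.norm_eq_abs, abs_of_pos hε]
    calc N Bε = N (B + (ε:ℂ) • 1) := by rw [hBεdef]
    _ ≤ N B + N ((ε:ℂ) • (1 : Matrix (Fin d) (Fin d) ℂ)) := hN_add _ _
    _ = N B + ε * N 1 := by rw [h2]
  have eA : N (((1+ε:ℝ):ℂ) • Aε) = (1+ε) * N Aε := by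
    rw [hN_smul (((1+ε:ℝ)):ℂ) Aε, Complex.norm_real, Real.norm_eq_abs, abs_of_pos hε0]
  have eB : N ((ε:ℂ) • Bε) = ε * N Bε := by
    rw [hN_smul ((ε:ℂ)) Bε, Complex.norm_real, Real.norm_eq_abs, abs_of_pos hε]
  have hNA : N A ≤ (1+ε) * N Aε + ε * N Bε := by
    calc N A = N (((1+ε:ℝ):ℂ) • Aε - (ε:ℂ) • Bε) := by rw [← hA_eq]
    _ ≤ N (((1+ε:ℝ):ℂ) • Aε) + N ((ε:ℂ) • Bε) := hsub _ _
    _ = (1+ε) * N Aε + ε * N Bε := by rw [eA, eB]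
  have c1 : N Aε ≤ N B + ε * N 1 := le_trans hmain hNBε
  have c2 : N Bε ≤ N B + ε * N 1 := hNBε
  have c3 : N A ≤ (1+ε) * (N B + ε * N 1) + ε * (N B + ε * N 1) := by
    have h1 := hN_nonneg Aε
    have h2 := hN_nonneg Bε
    nlinarith [mul_le_mul_of_nonneg_left c1 (by positivity : (0:ℝ) ≤ 1+ε),
      mul_le_mul_of_nonneg_left c2 hε.le]
  have c4 : (1+ε) * (N B + ε * N 1) + ε * (N B + ε * N 1) ≤ N B + ε * K0 := by
    rw [hK0def]
    nlinarith [mul_nonneg (mul_nonneg hε.le (sub_nonneg.mpr hε1)) (hN_nonneg 1),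
      mul_nonneg hε.le (hN_nonneg 1), mul_nonneg hε.le (hN_nonneg B)]
  linarith

/-- Key inequality: `N (Cᴴ D) ≤ (N (Cᴴ C) + N (Dᴴ D))/2`. -/
private lemma uins_key
    (hN_nonneg : ∀ X, 0 ≤ N X)
    (hN_smul : ∀ (c : ℂ) (X : Matrix (Fin d) (Fin d) ℂ), N (c • X) = ‖c‖ * N X)
    (hN_add : ∀ X Y, N (X + Y) ≤ N X + N Y)
    (hN_unitary : ∀ U : Matrix (Fin d) (Fin d) ℂ, U ∈ Matrix.unitaryGroup (Fin d) ℂ →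
      ∀ X, N (U * X) = N X ∧ N (X * U) = N X)
    (C D : Matrix (Fin d) (Fin d) ℂ) :
    N (Cᴴ * D) ≤ 1/2 * N (Cᴴ * C) + 1/2 * N (Dᴴ * D) := by
  have hsub : ∀ X Y : Matrix (Fin d) (Fin d) ℂ, N (X - Y) ≤ N X + N Y := by
    intro X Y
    have h1 : X - Y = X + (-1:ℂ) • Y := by module
    have h2 : N ((-1:ℂ) • Y) = N Y := by rw [hN_smul (-1:ℂ) Y]; simp
    calc N (X - Y) = N (X + (-1:ℂ) • Y) := by rw [← h1]
    _ ≤ N X + N ((-1:ℂ) • Y) := hN_add _ _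
    _ = N X + N Y := by rw [h2]
  refine le_of_forall_pos_le_add fun δ hδ => ?_
  obtain ⟨T, hTdef⟩ : ∃ X : Matrix (Fin d) (Fin d) ℂ, X = Cᴴ * D := ⟨_, rfl⟩
  rw [← hTdef]
  set K0 : ℝ := 4 * N 1 + 1 with hK0def
  have hK0 : 0 < K0 := by have := hN_nonneg 1; positivity
  set ε₀ : ℝ := min 1 (δ / K0) with hε₀def
  have hε₀ : 0 < ε₀ := lt_min one_pos (div_pos hδ hK0)
  -- all but finitely many shifts are invertible
  have hbadfin : {x : ℝ | ¬ IsUnit (T + (x:ℂ) • (1 : Matrix (Fin d) (Fin d) ℂ))}.Finite := by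
    have hsubset : {x : ℝ | ¬ IsUnit (T + (x:ℂ) • (1 : Matrix (Fin d) (Fin d) ℂ))}
        ⊆ (fun x : ℝ => (-(x:ℂ))) ⁻¹' (spectrum ℂ T) := by
      intro x hx
      simp only [Set.mem_setOf_eq] at hx
      rw [Set.mem_preimage, spectrum.mem_iff]
      intro hu
      apply hx
      have he : (algebraMap ℂ (Matrix (Fin d) (Fin d) ℂ)) (-(x:ℂ)) - T
          = -(T + (x:ℂ) • 1) := by
        rw [Algebra.algebraMap_eq_smul_one]
        module
      rw [he] at hu
      have := hu.neg
      rwa [neg_neg] at this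
    refine Set.Finite.subset (Set.Finite.preimage ?_ (Matrix.finite_spectrum T)) hsubset
    intro a _ b _ hab
    have : (a:ℂ) = (b:ℂ) := by
      have := congrArg Neg.neg hab
      simpa using this
    exact_mod_cast this
  obtain ⟨ε, hεmem⟩ := (((Set.Ioo_infinite hε₀).diff hbadfin)).nonempty
  obtain ⟨hεIoo, hεgood⟩ := hεmem
  obtain ⟨hεpos, hεlt⟩ := hεIoo
  have hεK : ε * K0 < δ := by
    have h1 : ε < δ / K0 := lt_of_lt_of_le hεlt (min_le_right _ _)
    calc ε * K0 < (δ / K0) * K0 := by nlinarith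
    _ = δ := by field_simp
  have hUnit : IsUnit (T + (ε:ℂ) • (1 : Matrix (Fin d) (Fin d) ℂ)) := by
    by_contra h
    exact hεgood (Set.mem_setOf_eq ▸ h)
  obtain ⟨Tε, hTεdef⟩ : ∃ X : Matrix (Fin d) (Fin d) ℂ, X = T + (ε:ℂ) • 1 := ⟨_, rfl⟩
  have hdet : IsUnit Tε.det := by
    rw [hTεdef]
    exact (Matrix.isUnit_iff_isUnit_det _).mp hUnit
  obtain ⟨U, hU, P, hP, hTεUP⟩ := uins_polar hdet
  have hUU : Uᴴ * U = 1 := by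
    have := Matrix.mem_unitaryGroup_iff'.mp hU
    rwa [Matrix.star_eq_conjTranspose] at this
  have hPval : Uᴴ * Tε = P := by rw [hTεUP, ← mul_assoc, hUU, one_mul]
  have hPH : Pᴴ = P := hP.1.eq
  have hPval' : Tεᴴ * U = P := by
    have h1 : (Uᴴ * Tε)ᴴ = Tεᴴ * U := by
      rw [Matrix.conjTranspose_mul, Matrix.conjTranspose_conjTranspose]
    rw [← hPH, ← hPval, h1]
  -- N T ≤ N P + ε N 1
  have hNT : N T ≤ N P + ε * N 1 := by
    have h1 : T = Tε - (ε:ℂ) • 1 := by rw [hTεdef]; abel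
    have h2 : N ((ε:ℂ) • (1 : Matrix (Fin d) (Fin d) ℂ)) = ε * N 1 := by
      rw [hN_smul ((ε:ℂ)) 1, Complex.norm_real, Real.norm_eq_abs, abs_of_pos hεpos]
    have h3 : N Tε = N P := by
      rw [hTεUP, (hN_unitary U hU P).1]
    calc N T = N (Tε - (ε:ℂ) • 1) := by rw [← h1]
    _ ≤ N Tε + N ((ε:ℂ) • (1 : Matrix (Fin d) (Fin d) ℂ)) := hsub _ _
    _ = N P + ε * N 1 := by rw [h2, h3]
  -- the PSD sandwich
  have hTεH : Tεᴴ = Dᴴ * C + (ε:ℂ) • 1 := by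
    rw [hTεdef, hTdef, Matrix.conjTranspose_add, Matrix.conjTranspose_mul,
      Matrix.conjTranspose_conjTranspose, Matrix.conjTranspose_smul, Matrix.conjTranspose_one]
    congr 1
    simp [Complex.star_def, Complex.conj_ofReal]
  have hUUX : ∀ X : Matrix (Fin d) (Fin d) ℂ, Uᴴ * (U * X) = X := by
    intro X
    rw [← mul_assoc, hUU, one_mul]
  have claim : Uᴴ * (Cᴴ * C) * U + Dᴴ * D + ((2*ε:ℝ):ℂ) • 1 - (Uᴴ * Tε + Tεᴴ * U)
      = (C * U - D)ᴴ * (C * U - D) + (ε:ℂ) • ((1 - U)ᴴ * (1 - U)) := by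
    have h2e : ((2*ε:ℝ):ℂ) • (1 : Matrix (Fin d) (Fin d) ℂ)
        = (ε:ℂ) • 1 + (ε:ℂ) • 1 := by push_cast; module
    rw [hTεH, hTεdef, hTdef, h2e]
    simp only [Matrix.conjTranspose_mul, Matrix.conjTranspose_sub, Matrix.conjTranspose_one,
      Matrix.conjTranspose_conjTranspose]
    simp only [Matrix.mul_sub, Matrix.sub_mul, Matrix.mul_add, Matrix.add_mul,
      Matrix.mul_one, Matrix.one_mul, Matrix.smul_mul, Matrix.mul_smul]
    simp only [mul_assoc, hUUX, hUU]
    simp only [smul_add, smul_sub, smul_smul]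
    abel
  have h2P : ((2:ℝ):ℂ) • P = Uᴴ * Tε + Tεᴴ * U := by
    rw [hPval, hPval']
    push_cast
    module
  -- apply monotonicity
  have hQ1 : ((C * U - D)ᴴ * (C * U - D)).PosSemidef :=
    Matrix.posSemidef_conjTranspose_mul_self _
  have hQ2 : ((ε:ℂ) • ((1 - U)ᴴ * ((1:Matrix (Fin d) (Fin d) ℂ) - U))).PosSemidef :=
    uins_smul_psd hεpos.le (Matrix.posSemidef_conjTranspose_mul_self _)
  have hA2 : (((2:ℝ):ℂ) • P).PosSemidef := uins_smul_psd (by norm_num) hP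
  have hBig : (Uᴴ * (Cᴴ * C) * U + Dᴴ * D + ((2*ε:ℝ):ℂ) • 1).PosSemidef := by
    refine Matrix.PosSemidef.add (Matrix.PosSemidef.add ?_ ?_) ?_
    · exact (Matrix.posSemidef_conjTranspose_mul_self C).conjTranspose_mul_mul_same U
    · exact Matrix.posSemidef_conjTranspose_mul_self D
    · exact uins_smul_psd (by positivity) Matrix.PosSemidef.one
  have hdiff : ((Uᴴ * (Cᴴ * C) * U + Dᴴ * D + ((2*ε:ℝ):ℂ) • 1) - ((2:ℝ):ℂ) • P).PosSemidef := by
    rw [h2P, claim]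
    exact hQ1.add hQ2
  have hmono := uins_mono hN_nonneg hN_smul hN_add hN_unitary hA2 hBig hdiff
  have hNP2 : N (((2:ℝ):ℂ) • P) = 2 * N P := by
    rw [hN_smul (((2:ℝ)):ℂ) P, Complex.norm_real, Real.norm_eq_abs]
    norm_num
  have hNBig : N (Uᴴ * (Cᴴ * C) * U + Dᴴ * D + ((2*ε:ℝ):ℂ) • 1)
      ≤ N (Cᴴ * C) + N (Dᴴ * D) + 2 * ε * N 1 := by
    have hconj : N (Uᴴ * (Cᴴ * C) * U) = N (Cᴴ * C) := by
      have := uins_conj hN_unitary hU (Cᴴ * C)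
      rwa [Matrix.star_eq_conjTranspose] at this
    have h2 : N (((2*ε:ℝ):ℂ) • (1 : Matrix (Fin d) (Fin d) ℂ)) = 2 * ε * N 1 := by
      rw [hN_smul (((2*ε:ℝ)):ℂ) 1, Complex.norm_real, Real.norm_eq_abs, abs_of_pos (by linarith)]
      try ring
    calc N (Uᴴ * (Cᴴ * C) * U + Dᴴ * D + ((2*ε:ℝ):ℂ) • 1)
        ≤ N (Uᴴ * (Cᴴ * C) * U + Dᴴ * D) + N (((2*ε:ℝ):ℂ) • (1:Matrix (Fin d) (Fin d) ℂ)) :=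
          hN_add _ _
    _ ≤ N (Uᴴ * (Cᴴ * C) * U) + N (Dᴴ * D) + N (((2*ε:ℝ):ℂ) • (1:Matrix (Fin d) (Fin d) ℂ)) := by
          have := hN_add (Uᴴ * (Cᴴ * C) * U) (Dᴴ * D)
          linarith
    _ = N (Cᴴ * C) + N (Dᴴ * D) + 2 * ε * N 1 := by rw [hconj, h2]
  have hfinal : 2 * N P ≤ N (Cᴴ * C) + N (Dᴴ * D) + 2 * ε * N 1 := by
    rw [← hNP2]; linarith
  have hεN1 : 2 * ε * N 1 + ε * N 1 ≤ δ := by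
    have h1 := hN_nonneg 1
    nlinarith
  linarith

end NormAux

/-- Inequality (3.4): if $X_1, X_3$ are Hermitian and $X_2 \succeq 0$, then
$N(X_1X_2X_3) \le \tfrac12 N(X_1X_2X_1) + \tfrac12 N(X_3X_2X_3)$. -/
theorem ui_norm_sandwich (d : ℕ)
    (N : Matrix (Fin d) (Fin d) ℂ → ℝ)
    (hN_nonneg : ∀ X, 0 ≤ N X)
    (hN_eq_zero : ∀ X, N X = 0 ↔ X = 0)
    (hN_smul : ∀ (c : ℂ) (X : Matrix (Fin d) (Fin d) ℂ), N (c • X) = ‖c‖ * N X)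
    (hN_add : ∀ X Y, N (X + Y) ≤ N X + N Y)
    (hN_unitary : ∀ U : Matrix (Fin d) (Fin d) ℂ, U ∈ Matrix.unitaryGroup (Fin d) ℂ →
      ∀ X, N (U * X) = N X ∧ N (X * U) = N X)
    (X₁ X₂ X₃ : Matrix (Fin d) (Fin d) ℂ)
    (h₁ : X₁.IsHermitian) (h₂ : X₂.PosSemidef) (h₃ : X₃.IsHermitian) :
    N (X₁ * X₂ * X₃) ≤ (1 / 2) * N (X₁ * X₂ * X₁) + (1 / 2) * N (X₃ * X₂ * X₃) := by
  obtain ⟨S, hS, hSS⟩ : ∃ S : Matrix (Fin d) (Fin d) ℂ, S.PosSemidef ∧ S * S = X₂ :=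
    ⟨CFC.sqrt X₂, (CFC.sqrt_nonneg X₂).posSemidef, CFC.sqrt_mul_sqrt_self X₂ h₂.nonneg⟩
  have hCH : (S * X₁)ᴴ = X₁ * S := by
    rw [Matrix.conjTranspose_mul, h₁.eq, hS.1.eq]
  have hDH : (S * X₃)ᴴ = X₃ * S := by
    rw [Matrix.conjTranspose_mul, h₃.eq, hS.1.eq]
  have key := uins_key hN_nonneg hN_smul hN_add hN_unitary (S * X₁) (S * X₃)
  rw [hCH, hDH] at key
  have e1 : X₁ * S * (S * X₃) = X₁ * X₂ * X₃ := by
    rw [← hSS]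
    simp only [← mul_assoc]
  have e2 : X₁ * S * (S * X₁) = X₁ * X₂ * X₁ := by
    rw [← hSS]
    simp only [← mul_assoc]
  have e3 : X₃ * S * (S * X₃) = X₃ * X₂ * X₃ := by
    rw [← hSS]
    simp only [← mul_assoc]
  rw [e1, e2, e3] at key
  convert key using 2 <;> ring
end

section
/- Let N be a unitarily invariant norm on M(d), and let A, B ∈ M(d) be positive-semidefinite. Then N(A²) + N(B²) ≥ N(AB) + N(BA). -/
open Matrix Finset
open scoped ComplexOrder

section UIAux

lemma diag_mem_unitary {d : ℕ} (z : Fin d → ℂ) (hz : ∀ j, ‖z j‖ = 1) :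
    Matrix.diagonal z ∈ Matrix.unitaryGroup (Fin d) ℂ := by
  have h : (fun i => z i * star z i) = fun _ : Fin d => (1:ℂ) := by
    funext j
    simp only [Pi.star_apply, Complex.star_def, Complex.mul_conj, Complex.normSq_eq_norm_sq, hz j]
    norm_num
  rw [Matrix.mem_unitaryGroup_iff, Matrix.star_eq_conjTranspose, Matrix.diagonal_conjTranspose,
    Matrix.diagonal_mul_diagonal, h, Matrix.diagonal_one]

lemma posDef_of_posSemidef_isUnit {d : ℕ} {M : Matrix (Fin d) (Fin d) ℂ}
    (hM : M.PosSemidef) (hu : IsUnit M.det) : M.PosDef := by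
  refine posDef_iff_dotProduct_mulVec.mpr ⟨hM.1, fun x hx => ?_⟩
  rcases lt_or_eq_of_le ((posSemidef_iff_dotProduct_mulVec.mp hM).2 x) with h | h
  · exact h
  · exfalso
    have h0 := (hM.dotProduct_mulVec_zero_iff x).mp h.symm
    have hinj : Function.Injective M.mulVec :=
      Matrix.mulVec_injective_iff_isUnit.mpr ((Matrix.isUnit_iff_isUnit_det M).mpr hu)
    exact hx (hinj (by rw [h0, Matrix.mulVec_zero]))

variable {d : ℕ}
  (N : Matrix (Fin d) (Fin d) ℂ → ℝ)
  (hN_smul : ∀ (c : ℂ) (X : Matrix (Fin d) (Fin d) ℂ), N (c • X) = ‖c‖ * N X)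
  (hN_add : ∀ X Y, N (X + Y) ≤ N X + N Y)
  (hN_unitary : ∀ U : Matrix (Fin d) (Fin d) ℂ, U ∈ Matrix.unitaryGroup (Fin d) ℂ →
      ∀ X, N (U * X) = N X ∧ N (X * U) = N X)

include hN_smul hN_add hN_unitary

open scoped MatrixOrder

lemma strip_lemma
    (V : Matrix (Fin d) (Fin d) ℂ) (hV : V ∈ Matrix.unitaryGroup (Fin d) ℂ)
    (μ : Fin d → ℝ) (hμ0 : ∀ j, 0 ≤ μ j) (hμ1 : ∀ j, μ j ≤ 1) (X : Matrix (Fin d) (Fin d) ℂ) :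
    N ((V * Matrix.diagonal (fun j => (μ j : ℂ)) * Vᴴ) * X) ≤ N X ∧
    N (X * (V * Matrix.diagonal (fun j => (μ j : ℂ)) * Vᴴ)) ≤ N X := by
  set z : Fin d → ℂ := fun j => (μ j : ℂ) + (Real.sqrt (1 - μ j ^ 2) : ℝ) * Complex.I with hzdef
  have h1μ : ∀ j, (0:ℝ) ≤ 1 - μ j ^ 2 := by
    intro j
    nlinarith [hμ0 j, hμ1 j]
  have hz : ∀ j, ‖z j‖ = 1 := by
    intro j
    have h1 : Complex.normSq (z j) = 1 := by
      rw [hzdef]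
      simp only [Complex.normSq_add_mul_I]
      rw [Real.sq_sqrt (h1μ j)]
      ring
    have h2 := Complex.sq_norm (z j)
    rw [h1] at h2
    nlinarith [norm_nonneg (z j)]
  have hVmem' : Vᴴ ∈ Matrix.unitaryGroup (Fin d) ℂ := by
    have := Unitary.star_mem hV
    rwa [Matrix.star_eq_conjTranspose] at this
  set E : Matrix (Fin d) (Fin d) ℂ := V * Matrix.diagonal z * Vᴴ with hEdef
  have hE : E ∈ Matrix.unitaryGroup (Fin d) ℂ :=
    mul_mem (mul_mem hV (diag_mem_unitary z hz)) hVmem'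
  have hEH : Eᴴ ∈ Matrix.unitaryGroup (Fin d) ℂ := by
    have := Unitary.star_mem hE
    rwa [Matrix.star_eq_conjTranspose] at this
  have hconj : Eᴴ = V * Matrix.diagonal (star z) * Vᴴ := by
    rw [hEdef, Matrix.conjTranspose_mul, Matrix.conjTranspose_mul,
      Matrix.conjTranspose_conjTranspose, Matrix.diagonal_conjTranspose, ← Matrix.mul_assoc]
  have hzz : (fun i => z i + star z i) = (2:ℂ) • (fun j => ((μ j : ℂ))) := by
    funext j
    simp only [hzdef, Pi.star_apply, Complex.star_def, map_add, _root_.map_mul,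
      Complex.conj_ofReal, Complex.conj_I, Pi.smul_apply, smul_eq_mul]
    ring
  have hsum : V * Matrix.diagonal (fun j => (μ j : ℂ)) * Vᴴ = ((1:ℂ)/2) • (E + Eᴴ) := by
    rw [hconj, hEdef, ← Matrix.add_mul, ← Matrix.mul_add, Matrix.diagonal_add]
    rw [show (fun i => z i + star z i) = (2:ℂ) • (fun j => ((μ j : ℂ))) from hzz]
    rw [Matrix.diagonal_smul, Matrix.mul_smul, Matrix.smul_mul, smul_smul]
    norm_num
  have h2 : ‖((1:ℂ)/2)‖ = 1/2 := by
    rw [norm_div]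
    simp
  constructor
  · have hx : (V * Matrix.diagonal (fun j => (μ j : ℂ)) * Vᴴ) * X
        = ((1:ℂ)/2) • (E * X + Eᴴ * X) := by
      rw [hsum, Matrix.smul_mul, Matrix.add_mul]
    rw [hx, hN_smul, h2]
    have h3 := hN_add (E * X) (Eᴴ * X)
    rw [(hN_unitary E hE X).1, (hN_unitary Eᴴ hEH X).1] at h3
    linarith
  · have hx : X * (V * Matrix.diagonal (fun j => (μ j : ℂ)) * Vᴴ)
        = ((1:ℂ)/2) • (X * E + X * Eᴴ) := by
      rw [hsum, Matrix.mul_smul, Matrix.mul_add]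
    rw [hx, hN_smul, h2]
    have h3 := hN_add (X * E) (X * Eᴴ)
    rw [(hN_unitary E hE X).2, (hN_unitary Eᴴ hEH X).2] at h3
    linarith

lemma N_mono {P Q : Matrix (Fin d) (Fin d) ℂ} (hP : P.PosDef) (hQ : Q.PosDef)
    (hPQ : (Q - P).PosSemidef) : N P ≤ N Q := by
  classical
  have hQps := hQ.posSemidef
  have hPps := hP.posSemidef
  obtain ⟨R, hRdef⟩ : ∃ R, R = CFC.sqrt Q := ⟨_, rfl⟩
  have hRps : R.PosSemidef := by rw [hRdef]; exact Matrix.nonneg_iff_posSemidef.mp (CFC.sqrt_nonneg Q)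
  have hRR : R * R = Q := by rw [hRdef]; exact CFC.sqrt_mul_sqrt_self Q (Matrix.nonneg_iff_posSemidef.mpr hQps)
  have hRdetu : IsUnit R.det := by
    have hd : R.det * R.det = Q.det := by rw [← Matrix.det_mul, hRR]
    have hQd : Q.det ≠ 0 := hQ.det_pos.ne'
    exact isUnit_iff_ne_zero.mpr fun h => hQd (by rw [← hd, h, zero_mul])
  have hRinv : R⁻¹ * R = 1 := Matrix.nonsing_inv_mul R hRdetu
  have hRinv' : R * R⁻¹ = 1 := Matrix.mul_nonsing_inv R hRdetu
  have hRH : Rᴴ = R := hRps.1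
  have hRiH : (R⁻¹)ᴴ = R⁻¹ := by rw [Matrix.conjTranspose_nonsing_inv, hRH]
  obtain ⟨SP, hSPdef⟩ : ∃ SP, SP = CFC.sqrt P := ⟨_, rfl⟩
  have hSPps : SP.PosSemidef := by rw [hSPdef]; exact Matrix.nonneg_iff_posSemidef.mp (CFC.sqrt_nonneg P)
  have hSPSP : SP * SP = P := by rw [hSPdef]; exact CFC.sqrt_mul_sqrt_self P (Matrix.nonneg_iff_posSemidef.mpr hPps)
  have hSPH : SPᴴ = SP := hSPps.1
  obtain ⟨M, hMdef⟩ : ∃ M, M = R⁻¹ * P * R⁻¹ := ⟨_, rfl⟩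
  have hMps : M.PosSemidef := by
    have h := hPps.mul_mul_conjTranspose_same R⁻¹
    rwa [hRiH, ← hMdef] at h
  have hRidet : (R⁻¹).det ≠ 0 := by
    rw [Matrix.det_nonsing_inv]
    simp only [Ring.inverse_eq_inv']
    exact inv_ne_zero (isUnit_iff_ne_zero.mp hRdetu)
  have hMdetu : IsUnit M.det := by
    rw [hMdef, Matrix.det_mul, Matrix.det_mul]
    exact isUnit_iff_ne_zero.mpr
      (mul_ne_zero (mul_ne_zero hRidet hP.det_pos.ne') hRidet)
  have hMpd : M.PosDef := posDef_of_posSemidef_isUnit hMps hMdetu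
  have h1M : ((1 : Matrix (Fin d) (Fin d) ℂ) - M).PosSemidef := by
    have e : (1 : Matrix (Fin d) (Fin d) ℂ) - M = R⁻¹ * (Q - P) * R⁻¹ := by
      rw [Matrix.mul_sub, Matrix.sub_mul, hMdef]
      rw [← hRR, ← Matrix.mul_assoc, hRinv, Matrix.one_mul, hRinv']
    rw [e]
    have h := hPQ.mul_mul_conjTranspose_same R⁻¹
    rwa [hRiH] at h
  -- spectral data for M
  obtain ⟨V, hVdef⟩ : ∃ V : Matrix (Fin d) (Fin d) ℂ, V = hMps.1.eigenvectorUnitary :=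
    ⟨_, rfl⟩
  have hVmem : V ∈ Matrix.unitaryGroup (Fin d) ℂ := by
    rw [hVdef]; exact hMps.1.eigenvectorUnitary.2
  obtain ⟨μ, hμdef⟩ : ∃ μ : Fin d → ℝ, μ = hMps.1.eigenvalues := ⟨_, rfl⟩
  have hspec : M = V * Matrix.diagonal (fun j => (μ j : ℂ)) * Vᴴ := by
    rw [hVdef, hμdef]
    have h := hMps.1.spectral_theorem
    rw [Unitary.conjStarAlgAut_apply, Matrix.star_eq_conjTranspose] at h
    exact h
  have hVV : Vᴴ * V = 1 := by
    have h := Matrix.mem_unitaryGroup_iff'.mp hVmem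
    rwa [Matrix.star_eq_conjTranspose] at h
  have hVV' : V * Vᴴ = 1 := by
    have h := Matrix.mem_unitaryGroup_iff.mp hVmem
    rwa [Matrix.star_eq_conjTranspose] at h
  have hμpos : ∀ j, 0 < μ j := by rw [hμdef]; exact hMpd.eigenvalues_pos
  have hμ1 : ∀ j, μ j ≤ 1 := by
    intro j
    have hD : ((1 : Matrix (Fin d) (Fin d) ℂ) - Matrix.diagonal (fun j => (μ j : ℂ))).PosSemidef := by
      have h := h1M.conjTranspose_mul_mul_same V
      have e : Vᴴ * ((1 : Matrix (Fin d) (Fin d) ℂ) - M) * V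
          = (1 : Matrix (Fin d) (Fin d) ℂ) - Matrix.diagonal (fun j => (μ j : ℂ)) := by
        rw [Matrix.mul_sub, Matrix.sub_mul, Matrix.mul_one, hVV]
        congr 1
        rw [hspec]
        calc Vᴴ * (V * Matrix.diagonal (fun j => (μ j : ℂ)) * Vᴴ) * V
            = (Vᴴ * V) * Matrix.diagonal (fun j => (μ j : ℂ)) * (Vᴴ * V) := by
              simp only [Matrix.mul_assoc]
          _ = Matrix.diagonal (fun j => (μ j : ℂ)) := by
              rw [hVV, Matrix.one_mul, Matrix.mul_one]
      rwa [e] at h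
    have hdiag : ((1 : Matrix (Fin d) (Fin d) ℂ) - Matrix.diagonal (fun j => (μ j : ℂ)))
        = Matrix.diagonal (fun j => ((1 - μ j : ℝ) : ℂ)) := by
      rw [← Matrix.diagonal_one, Matrix.diagonal_sub]
      congr 1
      funext j
      push_cast
      ring
    rw [hdiag] at hD
    have := Matrix.posSemidef_diagonal_iff.mp hD j
    have h01 : (0:ℝ) ≤ 1 - μ j := by exact_mod_cast this
    linarith
  -- the three matrices H, Hi
  obtain ⟨ν, hνdef⟩ : ∃ ν : Fin d → ℝ, ν = fun j => Real.sqrt (μ j) := ⟨_, rfl⟩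
  have hν0 : ∀ j, 0 ≤ ν j := fun j => by rw [hνdef]; exact Real.sqrt_nonneg _
  have hν1 : ∀ j, ν j ≤ 1 := fun j => by rw [hνdef]; exact Real.sqrt_le_one.mpr (hμ1 j)
  have hνne : ∀ j, ν j ≠ 0 := fun j => by rw [hνdef]; exact (Real.sqrt_pos.mpr (hμpos j)).ne'
  have hνsq : ∀ j, ν j * ν j = μ j := fun j => by
    rw [hνdef]; exact Real.mul_self_sqrt (hμpos j).le
  obtain ⟨H, hHdef⟩ : ∃ H : Matrix (Fin d) (Fin d) ℂ,
      H = V * Matrix.diagonal (fun j => (ν j : ℂ)) * Vᴴ := ⟨_, rfl⟩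
  obtain ⟨Hi, hHidef⟩ : ∃ Hi : Matrix (Fin d) (Fin d) ℂ,
      Hi = V * Matrix.diagonal (fun j => (((ν j)⁻¹ : ℝ) : ℂ)) * Vᴴ := ⟨_, rfl⟩
  have hmul : ∀ f g : Fin d → ℂ, (V * Matrix.diagonal f * Vᴴ) * (V * Matrix.diagonal g * Vᴴ)
      = V * Matrix.diagonal (fun j => f j * g j) * Vᴴ := by
    intro f g
    calc (V * Matrix.diagonal f * Vᴴ) * (V * Matrix.diagonal g * Vᴴ)
        = V * (Matrix.diagonal f * ((Vᴴ * V) * (Matrix.diagonal g * Vᴴ))) := by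
          simp only [Matrix.mul_assoc]
      _ = V * (Matrix.diagonal f * (Matrix.diagonal g * Vᴴ)) := by
          rw [hVV, Matrix.one_mul]
      _ = V * ((Matrix.diagonal f * Matrix.diagonal g) * Vᴴ) := by
          simp only [Matrix.mul_assoc]
      _ = V * Matrix.diagonal (fun j => f j * g j) * Vᴴ := by
          rw [Matrix.diagonal_mul_diagonal, Matrix.mul_assoc]
  have hherm : ∀ f : Fin d → ℝ, (V * Matrix.diagonal (fun j => (f j : ℂ)) * Vᴴ)ᴴ
      = V * Matrix.diagonal (fun j => (f j : ℂ)) * Vᴴ := by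
    intro f
    rw [Matrix.conjTranspose_mul, Matrix.conjTranspose_mul, Matrix.conjTranspose_conjTranspose,
      Matrix.diagonal_conjTranspose, ← Matrix.mul_assoc]
    have : star (fun j => ((f j : ℝ) : ℂ)) = fun j => ((f j : ℝ) : ℂ) := by
      funext j
      simp [Complex.conj_ofReal]
    rw [this]
  have hHH : H * H = M := by
    rw [hHdef, hmul]
    have e : (fun j => ((ν j : ℝ) : ℂ) * ((ν j : ℝ) : ℂ)) = fun j => ((μ j : ℝ) : ℂ) := by
      funext j
      rw [← Complex.ofReal_mul, hνsq j]
    rw [e, ← hspec]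
  have hHHi : H * Hi = 1 := by
    rw [hHdef, hHidef, hmul]
    have e : (fun j => ((ν j : ℝ) : ℂ) * (((ν j)⁻¹ : ℝ) : ℂ)) = fun _ => (1:ℂ) := by
      funext j
      rw [← Complex.ofReal_mul, mul_inv_cancel₀ (hνne j)]
      norm_num
    rw [e, Matrix.diagonal_one, Matrix.mul_one, hVV']
  have hHiH : Hi * H = 1 := mul_eq_one_comm.mp hHHi
  have hHherm : Hᴴ = H := by rw [hHdef]; exact hherm ν
  have hHiherm : Hiᴴ = Hi := by rw [hHidef]; exact hherm _
  -- K and W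
  obtain ⟨K, hKdef⟩ : ∃ K : Matrix (Fin d) (Fin d) ℂ, K = SP * R⁻¹ := ⟨_, rfl⟩
  have hKH : Kᴴ = R⁻¹ * SP := by
    rw [hKdef, Matrix.conjTranspose_mul, hRiH, hSPH]
  have hKK : Kᴴ * K = M := by
    rw [hKH, hKdef, hMdef]
    calc R⁻¹ * SP * (SP * R⁻¹) = R⁻¹ * (SP * SP) * R⁻¹ := by simp only [Matrix.mul_assoc]
      _ = R⁻¹ * P * R⁻¹ := by rw [hSPSP]
  obtain ⟨W, hWdef⟩ : ∃ W : Matrix (Fin d) (Fin d) ℂ, W = K * Hi := ⟨_, rfl⟩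
  have hWmem : W ∈ Matrix.unitaryGroup (Fin d) ℂ := by
    rw [Matrix.mem_unitaryGroup_iff', Matrix.star_eq_conjTranspose]
    rw [hWdef, Matrix.conjTranspose_mul, hHiherm]
    calc Hi * Kᴴ * (K * Hi) = Hi * (Kᴴ * K) * Hi := by simp only [Matrix.mul_assoc]
      _ = Hi * (H * H) * Hi := by rw [hKK, hHH]
      _ = (Hi * H) * (H * Hi) := by simp only [Matrix.mul_assoc]
      _ = 1 := by rw [hHiH, hHHi, Matrix.one_mul]
  have hWH : Wᴴ ∈ Matrix.unitaryGroup (Fin d) ℂ := by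
    have := Unitary.star_mem hWmem
    rwa [Matrix.star_eq_conjTranspose] at this
  have hKWH : K = W * H := by
    rw [hWdef, Matrix.mul_assoc, hHiH, Matrix.mul_one]
  have hKR : K * R = SP := by
    rw [hKdef, Matrix.mul_assoc, hRinv, Matrix.mul_one]
  have hRKH : Rᴴ * Kᴴ = SP := by
    rw [← Matrix.conjTranspose_mul, hKR, hSPH]
  have hPval : P = W * (H * Q * H) * Wᴴ := by
    have hP2 : P = K * Q * Kᴴ := by
      calc P = SP * SP := hSPSP.symm
        _ = (K * R) * (Rᴴ * Kᴴ) := by rw [hKR, hRKH]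
        _ = K * (R * Rᴴ) * Kᴴ := by simp only [Matrix.mul_assoc]
        _ = K * Q * Kᴴ := by rw [hRH, hRR]
    rw [hP2, hKWH, Matrix.conjTranspose_mul, hHherm]
    simp only [Matrix.mul_assoc]
  have hstrip := fun X => strip_lemma N hN_smul hN_add hN_unitary V hVmem ν hν0 hν1 X
  have hstripH : ∀ X, N (H * X) ≤ N X ∧ N (X * H) ≤ N X := by
    intro X
    rw [hHdef]
    exact hstrip X
  calc N P = N (W * ((H * Q * H) * Wᴴ)) := by rw [hPval, Matrix.mul_assoc]
    _ = N ((H * Q * H) * Wᴴ) := (hN_unitary W hWmem _).1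
    _ = N (H * Q * H) := (hN_unitary Wᴴ hWH _).2
    _ = N (H * (Q * H)) := by rw [Matrix.mul_assoc]
    _ ≤ N (Q * H) := (hstripH (Q * H)).1
    _ ≤ N Q := (hstripH Q).2

lemma main_PD (A B : Matrix (Fin d) (Fin d) ℂ) (hA : A.PosDef) (hB : B.PosDef) :
    N (A * B) + N (B * A) ≤ N (A * A) + N (B * B) := by
  classical
  obtain ⟨G, hGdef⟩ : ∃ G : Matrix (Fin d) (Fin d) ℂ, G = A * B := ⟨_, rfl⟩
  have hGH : Gᴴ = B * A := by
    rw [hGdef, Matrix.conjTranspose_mul, hA.isHermitian.eq, hB.isHermitian.eq]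
  have hGdet : G.det ≠ 0 := by
    rw [hGdef, Matrix.det_mul]
    exact mul_ne_zero hA.det_pos.ne' hB.det_pos.ne'
  obtain ⟨M0, hM0def⟩ : ∃ M0 : Matrix (Fin d) (Fin d) ℂ, M0 = Gᴴ * G := ⟨_, rfl⟩
  have hM0ps : M0.PosSemidef := by
    rw [hM0def]; exact Matrix.posSemidef_conjTranspose_mul_self G
  obtain ⟨S, hSdef⟩ : ∃ S, S = CFC.sqrt M0 := ⟨_, rfl⟩
  have hSps : S.PosSemidef := by rw [hSdef]; exact Matrix.nonneg_iff_posSemidef.mp (CFC.sqrt_nonneg M0)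
  have hSS : S * S = M0 := by rw [hSdef]; exact CFC.sqrt_mul_sqrt_self M0 (Matrix.nonneg_iff_posSemidef.mpr hM0ps)
  have hSH : Sᴴ = S := hSps.1
  have hM0det : M0.det ≠ 0 := by
    rw [hM0def, Matrix.det_mul, Matrix.det_conjTranspose]
    exact mul_ne_zero (star_ne_zero.mpr hGdet) hGdet
  have hSdetu : IsUnit S.det := by
    have hd : S.det * S.det = M0.det := by rw [← Matrix.det_mul, hSS]
    exact isUnit_iff_ne_zero.mpr fun h => hM0det (by rw [← hd, h, zero_mul])
  have hSpd : S.PosDef := posDef_of_posSemidef_isUnit hSps hSdetu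
  have hSinv : S⁻¹ * S = 1 := Matrix.nonsing_inv_mul S hSdetu
  have hSinv' : S * S⁻¹ = 1 := Matrix.mul_nonsing_inv S hSdetu
  have hSiH : (S⁻¹)ᴴ = S⁻¹ := by rw [Matrix.conjTranspose_nonsing_inv, hSH]
  obtain ⟨U, hUdef⟩ : ∃ U : Matrix (Fin d) (Fin d) ℂ, U = G * S⁻¹ := ⟨_, rfl⟩
  have hUH : Uᴴ = S⁻¹ * Gᴴ := by rw [hUdef, Matrix.conjTranspose_mul, hSiH]
  have hUU : Uᴴ * U = 1 := by
    rw [hUH, hUdef]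
    calc S⁻¹ * Gᴴ * (G * S⁻¹) = S⁻¹ * (Gᴴ * G) * S⁻¹ := by simp only [Matrix.mul_assoc]
      _ = S⁻¹ * (S * S) * S⁻¹ := by rw [← hM0def, ← hSS]
      _ = (S⁻¹ * S) * (S * S⁻¹) := by simp only [Matrix.mul_assoc]
      _ = 1 := by rw [hSinv, hSinv', Matrix.one_mul]
  have hUmem : U ∈ Matrix.unitaryGroup (Fin d) ℂ := by
    rw [Matrix.mem_unitaryGroup_iff', Matrix.star_eq_conjTranspose]
    exact hUU
  have hUHmem : Uᴴ ∈ Matrix.unitaryGroup (Fin d) ℂ := by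
    have := Unitary.star_mem hUmem
    rwa [Matrix.star_eq_conjTranspose] at this
  have hGU : G = U * S := by
    rw [hUdef, Matrix.mul_assoc, hSinv, Matrix.mul_one]
  have hS1 : Uᴴ * (A * B) = S := by
    rw [hUH, ← hGdef]
    calc S⁻¹ * Gᴴ * G = S⁻¹ * (Gᴴ * G) := Matrix.mul_assoc _ _ _
      _ = S⁻¹ * (S * S) := by rw [← hM0def, ← hSS]
      _ = (S⁻¹ * S) * S := (Matrix.mul_assoc _ _ _).symm
      _ = S := by rw [hSinv, Matrix.one_mul]
  have hS2 : (B * A) * U = S := by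
    rw [← hGH, hUdef]
    calc Gᴴ * (G * S⁻¹) = (Gᴴ * G) * S⁻¹ := (Matrix.mul_assoc _ _ _).symm
      _ = (S * S) * S⁻¹ := by rw [← hM0def, ← hSS]
      _ = S * (S * S⁻¹) := Matrix.mul_assoc _ _ _
      _ = S := by rw [hSinv', Matrix.mul_one]
  -- N (A*B) = N S and N (B*A) = N S
  have hNAB : N (A * B) = N S := by
    rw [← hGdef, hGU]
    exact (hN_unitary U hUmem S).1
  have hNBA : N (B * A) = N S := by
    have e : B * A = S * Uᴴ := by
      rw [← hGH, hGU, Matrix.conjTranspose_mul, hSH]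
    rw [e]
    exact (hN_unitary Uᴴ hUHmem S).2
  -- Q and the key PSD inequality
  obtain ⟨Q, hQdef⟩ : ∃ Q : Matrix (Fin d) (Fin d) ℂ, Q = Uᴴ * (A * A) * U + B * B :=
    ⟨_, rfl⟩
  have hBBps : (B * B).PosSemidef := by
    have h := hB.posSemidef.pow 2
    rwa [pow_two] at h
  have hBBdetu : IsUnit (B * B).det := by
    rw [Matrix.det_mul]
    exact isUnit_iff_ne_zero.mpr (mul_ne_zero hB.det_pos.ne' hB.det_pos.ne')
  have hBBpd : (B * B).PosDef := posDef_of_posSemidef_isUnit hBBps hBBdetu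
  have hAAps : (A * A).PosSemidef := by
    have h := hA.posSemidef.pow 2
    rwa [pow_two] at h
  have hQpd : Q.PosDef := by
    rw [hQdef]
    exact Matrix.PosDef.posSemidef_add (hAAps.conjTranspose_mul_mul_same U) hBBpd
  have hSSpd : (S + S).PosDef := hSpd.add hSpd
  have hkey : (Q - (S + S)).PosSemidef := by
    have hid : Q - (S + S) = (A * U - B)ᴴ * (A * U - B) := by
      have hSSe : S + S = Uᴴ * (A * B) + (B * A) * U := by rw [hS1, hS2]
      rw [hQdef, hSSe, Matrix.conjTranspose_sub, Matrix.conjTranspose_mul,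
        hA.isHermitian.eq, hB.isHermitian.eq]
      noncomm_ring
    rw [hid]
    exact Matrix.posSemidef_conjTranspose_mul_self _
  have hmono := N_mono N hN_smul hN_add hN_unitary hSSpd hQpd hkey
  have h2S : N (S + S) = N S + N S := by
    have e : S + S = (2:ℂ) • S := (two_smul ℂ S).symm
    rw [e, hN_smul, Complex.norm_two]
    ring
  have hQbound : N Q ≤ N (A * A) + N (B * B) := by
    rw [hQdef]
    have h1 := hN_add (Uᴴ * (A * A) * U) (B * B)
    have e1 : N (Uᴴ * (A * A) * U) = N (A * A) := by
      calc N (Uᴴ * (A * A) * U) = N (Uᴴ * (A * A)) := (hN_unitary U hUmem _).2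
        _ = N (A * A) := (hN_unitary Uᴴ hUHmem _).1
    rw [e1] at h1
    exact h1
  rw [hNAB, hNBA, ← h2S]
  exact le_trans hmono hQbound

end UIAux

/-- For positive-semidefinite $A, B$ and a unitarily invariant norm $N$,
$N(A^2) + N(B^2) \ge N(AB) + N(BA)$. -/
theorem ui_norm_sq_sum_ge (d : ℕ)
    (N : Matrix (Fin d) (Fin d) ℂ → ℝ)
    (hN_nonneg : ∀ X, 0 ≤ N X)
    (hN_eq_zero : ∀ X, N X = 0 ↔ X = 0)
    (hN_smul : ∀ (c : ℂ) (X : Matrix (Fin d) (Fin d) ℂ), N (c • X) = ‖c‖ * N X)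
    (hN_add : ∀ X Y, N (X + Y) ≤ N X + N Y)
    (hN_unitary : ∀ U : Matrix (Fin d) (Fin d) ℂ, U ∈ Matrix.unitaryGroup (Fin d) ℂ →
      ∀ X, N (U * X) = N X ∧ N (X * U) = N X)
    (A B : Matrix (Fin d) (Fin d) ℂ) (hA : A.PosSemidef) (hB : B.PosSemidef) :
    N (A ^ 2) + N (B ^ 2) ≥ N (A * B) + N (B * A) := by
  classical
  have hpert : ∀ (X Y Z W : Matrix (Fin d) (Fin d) ℂ) (c1 c2 : ℂ),
      X = Y + (c1 • Z + c2 • W) →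
      N X ≤ N Y + ‖c1‖ * N Z + ‖c2‖ * N W := by
    intro X Y Z W c1 c2 hXY
    rw [hXY]
    calc N (Y + (c1 • Z + c2 • W)) ≤ N Y + N (c1 • Z + c2 • W) := hN_add _ _
      _ ≤ N Y + (N (c1 • Z) + N (c2 • W)) := by linarith [hN_add (c1 • Z) (c2 • W)]
      _ = N Y + ‖c1‖ * N Z + ‖c2‖ * N W := by
          rw [hN_smul, hN_smul]; ring
  obtain ⟨C, hCdef⟩ : ∃ C : ℝ, C = 2 * N (A + B) + 2 * N A + 2 * N B + 4 * N 1 := ⟨_, rfl⟩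
  have hC0 : 0 ≤ C := by
    rw [hCdef]
    have h1 := hN_nonneg (A + B)
    have h2 := hN_nonneg A
    have h3 := hN_nonneg B
    have h4 := hN_nonneg 1
    linarith
  have key : ∀ ε : ℝ, 0 < ε → ε ≤ 1 →
      N (A * B) + N (B * A) ≤ N (A ^ 2) + N (B ^ 2) + ε * C := by
    intro ε hε hε1
    have hεI : (((ε:ℂ)) • (1 : Matrix (Fin d) (Fin d) ℂ)).PosDef := by
      have h1 : ((ε:ℂ) • (1 : Matrix (Fin d) (Fin d) ℂ))
          = Matrix.diagonal (fun _ : Fin d => (ε:ℂ)) := by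
        ext i j
        by_cases hij : i = j <;>
          simp [Matrix.one_apply, Matrix.diagonal_apply, Matrix.smul_apply, hij]
      rw [h1]
      exact Matrix.PosDef.diagonal (fun _ => by exact_mod_cast hε)
    obtain ⟨Ae, hAe⟩ : ∃ Ae, Ae = A + (ε:ℂ) • (1 : Matrix (Fin d) (Fin d) ℂ) := ⟨_, rfl⟩
    obtain ⟨Be, hBe⟩ : ∃ Be, Be = B + (ε:ℂ) • (1 : Matrix (Fin d) (Fin d) ℂ) := ⟨_, rfl⟩
    have hAepd : Ae.PosDef := by rw [hAe]; exact Matrix.PosDef.posSemidef_add hA hεI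
    have hBepd : Be.PosDef := by rw [hBe]; exact Matrix.PosDef.posSemidef_add hB hεI
    have hmain := main_PD N hN_smul hN_add hN_unitary Ae Be hAepd hBepd
    -- absolute values
    have habs1 : ‖(-(ε:ℂ))‖ = ε := by
      rw [show (-(ε:ℂ)) = (((-ε : ℝ)):ℂ) by push_cast; ring, Complex.norm_real, Real.norm_eq_abs, abs_neg,
        abs_of_pos hε]
    have habs2 : ‖(-((ε:ℂ)*(ε:ℂ)))‖ = ε * ε := by
      rw [show (-((ε:ℂ)*(ε:ℂ))) = (((-(ε*ε) : ℝ)):ℂ) by push_cast; ring, Complex.norm_real, Real.norm_eq_abs,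
        abs_neg, abs_of_pos (mul_pos hε hε)]
    have habs3 : ‖((ε:ℂ) + (ε:ℂ))‖ = ε + ε := by
      rw [show ((ε:ℂ) + (ε:ℂ)) = (((ε + ε : ℝ)):ℂ) by push_cast; ring, Complex.norm_real, Real.norm_eq_abs,
        abs_of_pos (by linarith)]
    have habs4 : ‖((ε:ℂ)*(ε:ℂ))‖ = ε * ε := by
      rw [show ((ε:ℂ)*(ε:ℂ)) = (((ε*ε : ℝ)):ℂ) by push_cast; ring, Complex.norm_real, Real.norm_eq_abs,
        abs_of_pos (mul_pos hε hε)]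
    -- identities
    have I1 : A * B = Ae * Be + ((-(ε:ℂ)) • (A + B) + (-((ε:ℂ)*(ε:ℂ))) • 1) := by
      rw [hAe, hBe]
      simp only [Matrix.add_mul, Matrix.mul_add, Matrix.smul_mul, Matrix.mul_smul,
        Matrix.one_mul, Matrix.mul_one, smul_smul, smul_add, neg_smul]
      abel
    have I2 : B * A = Be * Ae + ((-(ε:ℂ)) • (A + B) + (-((ε:ℂ)*(ε:ℂ))) • 1) := by
      rw [hAe, hBe]
      simp only [Matrix.add_mul, Matrix.mul_add, Matrix.smul_mul, Matrix.mul_smul,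
        Matrix.one_mul, Matrix.mul_one, smul_smul, smul_add, neg_smul]
      abel
    have I3 : Ae * Ae = A * A + (((ε:ℂ) + (ε:ℂ)) • A + ((ε:ℂ)*(ε:ℂ)) • 1) := by
      rw [hAe]
      simp only [Matrix.add_mul, Matrix.mul_add, Matrix.smul_mul, Matrix.mul_smul,
        Matrix.one_mul, Matrix.mul_one, smul_smul, smul_add, add_smul]
      abel
    have I4 : Be * Be = B * B + (((ε:ℂ) + (ε:ℂ)) • B + ((ε:ℂ)*(ε:ℂ)) • 1) := by
      rw [hBe]
      simp only [Matrix.add_mul, Matrix.mul_add, Matrix.smul_mul, Matrix.mul_smul,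
        Matrix.one_mul, Matrix.mul_one, smul_smul, smul_add, add_smul]
      abel
    have b1 := hpert _ _ _ _ _ _ I1
    have b2 := hpert _ _ _ _ _ _ I2
    have b3 := hpert _ _ _ _ _ _ I3
    have b4 := hpert _ _ _ _ _ _ I4
    rw [habs1, habs2] at b1 b2
    rw [habs3, habs4] at b3 b4
    have hee : ε * ε ≤ ε := by nlinarith
    have hA2 : N (A ^ 2) = N (A * A) := by rw [pow_two]
    have hB2 : N (B ^ 2) = N (B * B) := by rw [pow_two]
    have h1 := hN_nonneg (A + B)
    have h2 := hN_nonneg A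
    have h3 := hN_nonneg B
    have h4 := hN_nonneg 1
    rw [hA2, hB2, hCdef]
    nlinarith [hmain, b1, b2, b3, b4]
  rw [ge_iff_le]
  by_contra hcon
  push_neg at hcon
  obtain ⟨δ, hδdef⟩ : ∃ δ : ℝ, δ = (N (A * B) + N (B * A) - (N (A ^ 2) + N (B ^ 2))) / 2 :=
    ⟨_, rfl⟩
  have hδpos : 0 < δ := by rw [hδdef]; linarith
  have hεpos : 0 < min 1 (δ / (C + 1)) :=
    lt_min one_pos (div_pos hδpos (by linarith))
  have h := key (min 1 (δ / (C + 1))) hεpos (min_le_left _ _)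
  have hεC : (min 1 (δ / (C + 1))) * C ≤ δ := by
    have h1 : min 1 (δ / (C + 1)) ≤ δ / (C + 1) := min_le_right _ _
    have h2 : (0:ℝ) ≤ δ / (C + 1) := le_of_lt (div_pos hδpos (by linarith))
    calc (min 1 (δ / (C + 1))) * C ≤ (δ / (C + 1)) * C :=
          mul_le_mul_of_nonneg_right h1 hC0
      _ ≤ (δ / (C + 1)) * (C + 1) := by nlinarith
      _ = δ := div_mul_cancel₀ δ (by linarith)
  linarith
end

section
/- Let N be a unitarily invariant norm on M(d), and let A, B, C ∈ M(d) be positive-semidefinite. Then N(ABA) + N(CBC) ≥ N(ABC) + N(CBA). -/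
open Matrix Finset
open scoped ComplexOrder

variable {d : ℕ}

private lemma psd_diag_nonneg {M : Matrix (Fin d) (Fin d) ℂ} (hM : M.PosSemidef) (i : Fin d) :
    0 ≤ M i i := by
  exact hM.diag_nonneg

private lemma diagonal_ext {d : ℕ} {f g : Fin d → ℂ} (h : ∀ i, f i = g i) :
    Matrix.diagonal f = Matrix.diagonal g :=
  congrArg Matrix.diagonal (funext h)

private lemma contraction_avg {K : Matrix (Fin d) (Fin d) ℂ}
    (hdet : IsUnit K.det) (hc : (1 - Kᴴ * K).PosSemidef) :
    ∃ V₁ V₂ : Matrix (Fin d) (Fin d) ℂ, V₁ ∈ Matrix.unitaryGroup (Fin d) ℂ ∧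
      V₂ ∈ Matrix.unitaryGroup (Fin d) ℂ ∧ V₁ + V₂ = (2:ℂ) • K := by
  have hH : (Kᴴ * K).PosSemidef := posSemidef_conjTranspose_mul_self K
  have hHerm : (Kᴴ * K).IsHermitian := hH.isHermitian
  set O : Matrix (Fin d) (Fin d) ℂ := (hHerm.eigenvectorUnitary : Matrix (Fin d) (Fin d) ℂ) with hOdef
  have hO : O ∈ Matrix.unitaryGroup (Fin d) ℂ := (hHerm.eigenvectorUnitary).2
  have hOsm : star O * O = 1 := mem_unitaryGroup_iff'.mp hO
  have hOms : O * star O = 1 := mem_unitaryGroup_iff.mp hO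
  set lam := hHerm.eigenvalues with hlam
  set D : Matrix (Fin d) (Fin d) ℂ := diagonal (fun i => (lam i : ℂ)) with hDdef
  have hspec : Kᴴ * K = O * D * star O := by
    have h := hHerm.spectral_theorem
    rw [Unitary.conjStarAlgAut_apply] at h
    exact h
  have hl0 : ∀ i, 0 ≤ lam i := hH.eigenvalues_nonneg
  have hOHO : star O * (Kᴴ * K) * O = D := by
    rw [hspec]
    simp only [Matrix.mul_assoc, hOsm, Matrix.mul_one]
    simp only [← Matrix.mul_assoc, hOsm, Matrix.one_mul]
  have hl1 : ∀ i, lam i ≤ 1 := by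
    intro i
    have hcong : (star O * (1 - Kᴴ * K) * O).PosSemidef := by
      have h := hc.conjTranspose_mul_mul_same (B := O)
      rwa [← star_eq_conjTranspose] at h
    have heq : star O * (1 - Kᴴ * K) * O = 1 - D := by
      rw [Matrix.mul_sub, Matrix.mul_one, Matrix.sub_mul, hOsm, hOHO]
    rw [heq] at hcong
    have h0 := psd_diag_nonneg hcong i
    have h1 : (1 - D) i i = ((1 - lam i : ℝ) : ℂ) := by
      simp [hDdef, Matrix.sub_apply, Matrix.one_apply, Matrix.diagonal_apply]
    rw [h1] at h0
    have := Complex.zero_le_real.mp h0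
    linarith
  have key : ∀ X Y : Matrix (Fin d) (Fin d) ℂ,
      (O * X * star O) * (O * Y * star O) = O * (X * Y) * star O := by
    intro X Y
    calc (O * X * star O) * (O * Y * star O)
        = O * (X * ((star O * O) * (Y * star O))) := by simp only [Matrix.mul_assoc]
      _ = O * (X * Y) * star O := by
          rw [hOsm, Matrix.one_mul]; simp only [Matrix.mul_assoc]
  -- define square root P
  set mu : Fin d → ℝ := fun i => Real.sqrt (lam i) with hmu
  set w : Fin d → ℝ := fun i => Real.sqrt (1 - lam i) with hw
  set P : Matrix (Fin d) (Fin d) ℂ := O * diagonal (fun i => (mu i : ℂ)) * star O with hPdef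
  have hPP : P * P = Kᴴ * K := by
    rw [hspec, hPdef, key, diagonal_mul_diagonal]
    rw [show Matrix.diagonal (fun i => (mu i : ℂ) * (mu i : ℂ)) = D from
      diagonal_ext fun i => by rw [← Complex.ofReal_mul, Real.mul_self_sqrt (hl0 i)]]
  have hdiagH : (diagonal (fun i => (mu i : ℂ)))ᴴ = diagonal (fun i => (mu i : ℂ)) := by
    rw [diagonal_conjTranspose]
    exact diagonal_ext fun i => by
      show star ((mu i : ℂ)) = (mu i : ℂ)
      rw [Complex.star_def, Complex.conj_ofReal]
  have hPHerm : Pᴴ = P := by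
    rw [hPdef, star_eq_conjTranspose, conjTranspose_mul, conjTranspose_mul,
      conjTranspose_conjTranspose, hdiagH]
    simp only [Matrix.mul_assoc]
  have hPdet : IsUnit P.det := by
    rw [isUnit_iff_ne_zero]
    have h2 : P.det * P.det = (Kᴴ * K).det := by rw [← det_mul, hPP]
    have h3 : (Kᴴ * K).det ≠ 0 := by
      rw [det_mul, det_conjTranspose]
      have := isUnit_iff_ne_zero.mp hdet
      simp [this]
    intro h
    rw [h, mul_zero] at h2
    exact h3 h2.symm
  set W : Matrix (Fin d) (Fin d) ℂ := K * P⁻¹ with hWdef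
  have hWmem : W ∈ Matrix.unitaryGroup (Fin d) ℂ := by
    rw [mem_unitaryGroup_iff']
    have hsW : star W = P⁻¹ * Kᴴ := by
      rw [hWdef, star_eq_conjTranspose, conjTranspose_mul, conjTranspose_nonsing_inv, hPHerm]
    rw [hsW, hWdef]
    calc P⁻¹ * Kᴴ * (K * P⁻¹) = P⁻¹ * (Kᴴ * K) * P⁻¹ := by
          simp only [Matrix.mul_assoc]
      _ = P⁻¹ * (P * P) * P⁻¹ := by rw [hPP]
      _ = (P⁻¹ * P) * (P * P⁻¹) := by simp only [Matrix.mul_assoc]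
      _ = 1 := by rw [nonsing_inv_mul _ hPdet, mul_nonsing_inv _ hPdet, Matrix.one_mul]
  set z₁ : Fin d → ℂ := fun i => (mu i : ℂ) + Complex.I * (w i : ℂ) with hz1
  set z₂ : Fin d → ℂ := fun i => (mu i : ℂ) - Complex.I * (w i : ℂ) with hz2
  have hmul : ∀ i, z₂ i * z₁ i = 1 := by
    intro i
    have expand : z₂ i * z₁ i = ((mu i : ℂ))^2 - (Complex.I)^2 * ((w i : ℂ))^2 := by
      rw [hz1, hz2]; ring
    rw [expand, Complex.I_sq]
    have hm : ((mu i : ℂ))^2 = ((lam i : ℝ) : ℂ) := by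
      rw [← Complex.ofReal_pow, hmu]
      norm_cast
      exact Real.sq_sqrt (hl0 i)
    have hw2 : ((w i : ℂ))^2 = ((1 - lam i : ℝ) : ℂ) := by
      rw [← Complex.ofReal_pow, hw]
      norm_cast
      exact Real.sq_sqrt (by linarith [hl1 i])
    rw [hm, hw2]
    push_cast
    ring
  have hstar1 : ∀ i, star (z₁ i) = z₂ i := by
    intro i
    rw [hz1, hz2]
    simp [Complex.ext_iff]
  have hstar2 : ∀ i, star (z₂ i) = z₁ i := by
    intro i
    rw [hz1, hz2]
    simp [Complex.ext_iff]
  have hdzu : ∀ v : Fin d → ℂ, (∀ i, star (v i) * v i = 1) →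
      diagonal v ∈ Matrix.unitaryGroup (Fin d) ℂ := by
    intro v hv
    rw [mem_unitaryGroup_iff', star_eq_conjTranspose, diagonal_conjTranspose,
      diagonal_mul_diagonal, ← diagonal_one]
    exact diagonal_ext fun i => hv i
  have hdz1 : diagonal z₁ ∈ Matrix.unitaryGroup (Fin d) ℂ :=
    hdzu z₁ fun i => by rw [hstar1 i]; exact hmul i
  have hdz2 : diagonal z₂ ∈ Matrix.unitaryGroup (Fin d) ℂ :=
    hdzu z₂ fun i => by rw [hstar2 i, mul_comm]; exact hmul i
  have hOstar : star O ∈ Matrix.unitaryGroup (Fin d) ℂ := Unitary.star_mem hO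
  refine ⟨W * (O * diagonal z₁ * star O), W * (O * diagonal z₂ * star O),
    mul_mem hWmem (mul_mem (mul_mem hO hdz1) hOstar),
    mul_mem hWmem (mul_mem (mul_mem hO hdz2) hOstar), ?_⟩
  rw [← Matrix.mul_add]
  have h1 : O * diagonal z₁ * star O + O * diagonal z₂ * star O
      = O * (diagonal z₁ + diagonal z₂) * star O := by
    rw [Matrix.mul_add, Matrix.add_mul]
  have h2 : diagonal z₁ + diagonal z₂ = (2:ℂ) • diagonal (fun i => (mu i : ℂ)) := by
    rw [diagonal_add, ← diagonal_smul]
    exact diagonal_ext fun i => by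
      show z₁ i + z₂ i = 2 * (mu i : ℂ)
      rw [hz1, hz2]
      ring
  rw [h1, h2, mul_smul_comm, smul_mul_assoc, mul_smul_comm, ← hPdef, hWdef,
    nonsing_inv_mul_cancel_right _ _ hPdet]


private lemma posDef_smul_one {ε : ℝ} (hε : 0 < ε) :
    ((ε:ℂ) • (1 : Matrix (Fin d) (Fin d) ℂ)).PosDef := by
  have h1 : (ε:ℂ) • (1 : Matrix (Fin d) (Fin d) ℂ) = diagonal (fun _ => (ε:ℂ)) := by
    ext i j
    rcases eq_or_ne i j with h | h <;> simp [h, Matrix.one_apply, Matrix.diagonal_apply]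
  rw [h1]
  exact .diagonal fun i => Complex.zero_lt_real.mpr hε


open scoped MatrixOrder in
noncomputable def Matrix.PosSemidef.sqrt {A : Matrix (Fin d) (Fin d) ℂ} (_hA : A.PosSemidef) :
    Matrix (Fin d) (Fin d) ℂ := CFC.sqrt A

open scoped MatrixOrder in
theorem Matrix.PosSemidef.posSemidef_sqrt {A : Matrix (Fin d) (Fin d) ℂ} (hA : A.PosSemidef) :
    hA.sqrt.PosSemidef := Matrix.nonneg_iff_posSemidef.mp (CFC.sqrt_nonneg A)

open scoped MatrixOrder in
theorem Matrix.PosSemidef.sqrt_mul_self {A : Matrix (Fin d) (Fin d) ℂ} (hA : A.PosSemidef) :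
    hA.sqrt * hA.sqrt = A := CFC.sqrt_mul_sqrt_self A (Matrix.nonneg_iff_posSemidef.mpr hA)

section NormLemmas

variable {N : Matrix (Fin d) (Fin d) ℂ → ℝ}

private lemma N_unit_conj
    (hN_unitary : ∀ U : Matrix (Fin d) (Fin d) ℂ, U ∈ Matrix.unitaryGroup (Fin d) ℂ →
      ∀ X, N (U * X) = N X ∧ N (X * U) = N X)
    {U V : Matrix (Fin d) (Fin d) ℂ} (hU : U ∈ Matrix.unitaryGroup (Fin d) ℂ)
    (hV : V ∈ Matrix.unitaryGroup (Fin d) ℂ) (X : Matrix (Fin d) (Fin d) ℂ) :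
    N (U * X * V) = N X := by
  rw [(hN_unitary V hV (U * X)).2, (hN_unitary U hU X).1]

private lemma mono
    (hN_nonneg : ∀ X, 0 ≤ N X)
    (hN_smul : ∀ (c : ℂ) (X : Matrix (Fin d) (Fin d) ℂ), N (c • X) = ‖c‖ * N X)
    (hN_add : ∀ X Y, N (X + Y) ≤ N X + N Y)
    (hN_unitary : ∀ U : Matrix (Fin d) (Fin d) ℂ, U ∈ Matrix.unitaryGroup (Fin d) ℂ →
      ∀ X, N (U * X) = N X ∧ N (X * U) = N X)
    {S T : Matrix (Fin d) (Fin d) ℂ} (hS : S.PosSemidef) (hSdet : IsUnit S.det)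
    (hT : T.PosSemidef) (hTS : (T - S).PosSemidef) : N S ≤ N T := by
  have key : ∀ ε : ℝ, 0 < ε → N S ≤ N T + ε * N 1 := by
    intro ε hε
    set Tε : Matrix (Fin d) (Fin d) ℂ := T + (ε:ℂ) • 1 with hTe
    have hTεpd : Tε.PosDef := Matrix.PosDef.posSemidef_add hT (posDef_smul_one hε)
    have hTεpsd : Tε.PosSemidef := hTεpd.posSemidef
    set R : Matrix (Fin d) (Fin d) ℂ := hTεpsd.sqrt with hRdef
    have hRpsd : R.PosSemidef := hTεpsd.posSemidef_sqrt
    have hRR : R * R = Tε := hTεpsd.sqrt_mul_self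
    have hRH : Rᴴ = R := hRpsd.isHermitian
    have hTεdet : IsUnit Tε.det := (Matrix.isUnit_iff_isUnit_det _).mp hTεpd.isUnit
    have hRdet : IsUnit R.det := by
      rw [isUnit_iff_ne_zero]
      intro h
      have : R.det * R.det = Tε.det := by rw [← det_mul, hRR]
      rw [h, mul_zero] at this
      exact (isUnit_iff_ne_zero.mp hTεdet) this.symm
    have hRiH : (R⁻¹)ᴴ = R⁻¹ := by rw [conjTranspose_nonsing_inv, hRH]
    have hSsq : hS.sqrt * hS.sqrt = S := hS.sqrt_mul_self
    have hSsH : hS.sqrtᴴ = hS.sqrt := hS.posSemidef_sqrt.isHermitian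
    have hSsdet : IsUnit hS.sqrt.det := by
      rw [isUnit_iff_ne_zero]
      intro h
      have : hS.sqrt.det * hS.sqrt.det = S.det := by rw [← det_mul, hSsq]
      rw [h, mul_zero] at this
      exact (isUnit_iff_ne_zero.mp hSdet) this.symm
    set Kc : Matrix (Fin d) (Fin d) ℂ := hS.sqrt * R⁻¹ with hKdef
    have hKdet : IsUnit Kc.det := by
      rw [hKdef, det_mul]
      exact hSsdet.mul (by
        rw [det_nonsing_inv, isUnit_iff_ne_zero, Ring.inverse_eq_inv]
        exact inv_ne_zero (isUnit_iff_ne_zero.mp hRdet))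
    have hKH : Kcᴴ = R⁻¹ * hS.sqrt := by
      rw [hKdef, conjTranspose_mul, hRiH, hSsH]
    have hScomp : Kc * Tε * Kcᴴ = S := by
      rw [hKH, hKdef, ← hRR]
      calc hS.sqrt * R⁻¹ * (R * R) * (R⁻¹ * hS.sqrt)
          = hS.sqrt * ((R⁻¹ * R) * ((R * R⁻¹) * hS.sqrt)) := by
            simp only [Matrix.mul_assoc]
        _ = hS.sqrt * hS.sqrt := by
            rw [nonsing_inv_mul _ hRdet, mul_nonsing_inv _ hRdet, Matrix.one_mul, Matrix.one_mul]
        _ = S := hSsq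
    have hcontr : (1 - Kcᴴ * Kc).PosSemidef := by
      have hKK : Kcᴴ * Kc = R⁻¹ * S * R⁻¹ := by
        rw [hKH, hKdef]
        calc R⁻¹ * hS.sqrt * (hS.sqrt * R⁻¹)
            = R⁻¹ * (hS.sqrt * hS.sqrt) * R⁻¹ := by simp only [Matrix.mul_assoc]
          _ = R⁻¹ * S * R⁻¹ := by rw [hSsq]
      have hone : (1 : Matrix (Fin d) (Fin d) ℂ) = R⁻¹ * Tε * R⁻¹ := by
        rw [← hRR]
        calc (1 : Matrix (Fin d) (Fin d) ℂ) = (R⁻¹ * R) * (R * R⁻¹) := by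
              rw [nonsing_inv_mul _ hRdet, mul_nonsing_inv _ hRdet, Matrix.one_mul]
          _ = R⁻¹ * (R * R) * R⁻¹ := by simp only [Matrix.mul_assoc]
      rw [hKK, hone]
      have h2 : R⁻¹ * Tε * R⁻¹ - R⁻¹ * S * R⁻¹ = R⁻¹ * (Tε - S) * R⁻¹ := by
        rw [Matrix.mul_sub, Matrix.sub_mul]
      rw [h2]
      have hTS' : (Tε - S).PosSemidef := by
        have heq : Tε - S = (T - S) + (ε:ℂ) • 1 := by
          rw [hTe]; abel
        rw [heq]
        exact hTS.add (posDef_smul_one hε).posSemidef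
      have h3 := hTS'.mul_mul_conjTranspose_same (B := R⁻¹)
      rwa [hRiH] at h3
    obtain ⟨V₁, V₂, hV₁, hV₂, hVsum⟩ := contraction_avg hKdet hcontr
    have hV₁H : V₁ᴴ ∈ Matrix.unitaryGroup (Fin d) ℂ := by
      rw [← star_eq_conjTranspose]; exact Unitary.star_mem hV₁
    have hV₂H : V₂ᴴ ∈ Matrix.unitaryGroup (Fin d) ℂ := by
      rw [← star_eq_conjTranspose]; exact Unitary.star_mem hV₂
    have hKhalf : Kc = (2⁻¹:ℂ) • (V₁ + V₂) := by
      rw [hVsum, smul_smul]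
      norm_num
    have hKcH : Kcᴴ = (2⁻¹:ℂ) • (V₁ᴴ + V₂ᴴ) := by
      rw [hKhalf, conjTranspose_smul, conjTranspose_add]
      congr 1
      simp [Complex.ext_iff]
    have expand : Kc * Tε * Kcᴴ = (4⁻¹:ℂ) •
        (V₁ * Tε * V₁ᴴ + V₁ * Tε * V₂ᴴ + (V₂ * Tε * V₁ᴴ + V₂ * Tε * V₂ᴴ)) := by
      rw [hKcH, hKhalf, smul_mul_assoc, smul_mul_assoc, mul_smul_comm, smul_smul]
      rw [show (2⁻¹:ℂ) * 2⁻¹ = 4⁻¹ by norm_num]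
      congr 1
      simp only [Matrix.add_mul, Matrix.mul_add]
      abel
    have habs : ‖(4⁻¹:ℂ)‖ = 4⁻¹ := by
      rw [show (4⁻¹:ℂ) = ((4⁻¹:ℝ):ℂ) by norm_num, Complex.norm_real]
      norm_num
    have hterm : ∀ (Vi Vj : Matrix (Fin d) (Fin d) ℂ),
        Vi ∈ Matrix.unitaryGroup (Fin d) ℂ → Vjᴴ ∈ Matrix.unitaryGroup (Fin d) ℂ →
        N (Vi * Tε * Vjᴴ) = N Tε := fun Vi Vj hi hj => N_unit_conj hN_unitary hi hj Tε
    have hNTε : N Tε ≤ N T + ε * N 1 := by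
      have := hN_add T ((ε:ℂ) • 1)
      rw [hN_smul] at this
      rw [Complex.norm_real, Real.norm_eq_abs, abs_of_pos hε] at this
      exact this
    calc N S = N (Kc * Tε * Kcᴴ) := by rw [hScomp]
      _ = 4⁻¹ * N (V₁ * Tε * V₁ᴴ + V₁ * Tε * V₂ᴴ + (V₂ * Tε * V₁ᴴ + V₂ * Tε * V₂ᴴ)) := by
          rw [expand, hN_smul, habs]
      _ ≤ 4⁻¹ * (N (V₁ * Tε * V₁ᴴ) + N (V₁ * Tε * V₂ᴴ)
            + (N (V₂ * Tε * V₁ᴴ) + N (V₂ * Tε * V₂ᴴ))) := by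
          have h1 := hN_add (V₁ * Tε * V₁ᴴ + V₁ * Tε * V₂ᴴ) (V₂ * Tε * V₁ᴴ + V₂ * Tε * V₂ᴴ)
          have h2 := hN_add (V₁ * Tε * V₁ᴴ) (V₁ * Tε * V₂ᴴ)
          have h3 := hN_add (V₂ * Tε * V₁ᴴ) (V₂ * Tε * V₂ᴴ)
          have : 0 ≤ (4⁻¹:ℝ) := by norm_num
          nlinarith [h1, h2, h3]
      _ = N Tε := by
          rw [hterm V₁ V₁ hV₁ hV₁H, hterm V₁ V₂ hV₁ hV₂H,
            hterm V₂ V₁ hV₂ hV₁H, hterm V₂ V₂ hV₂ hV₂H]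
          ring
      _ ≤ N T + ε * N 1 := hNTε
  apply le_of_forall_pos_le_add
  intro δ hδ
  have hpos : (0:ℝ) < N 1 + 1 := by linarith [hN_nonneg 1]
  have hε : 0 < δ / (N 1 + 1) := div_pos hδ hpos
  calc N S ≤ N T + (δ / (N 1 + 1)) * N 1 := key _ hε
    _ ≤ N T + δ := by
        have h1 : (δ / (N 1 + 1)) * N 1 ≤ δ := by
          rw [div_mul_eq_mul_div, div_le_iff₀ hpos]
          nlinarith [hN_nonneg 1]
        linarith

private lemma cs
    (hN_nonneg : ∀ X, 0 ≤ N X)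
    (hN_smul : ∀ (c : ℂ) (X : Matrix (Fin d) (Fin d) ℂ), N (c • X) = ‖c‖ * N X)
    (hN_add : ∀ X Y, N (X + Y) ≤ N X + N Y)
    (hN_unitary : ∀ U : Matrix (Fin d) (Fin d) ℂ, U ∈ Matrix.unitaryGroup (Fin d) ℂ →
      ∀ X, N (U * X) = N X ∧ N (X * U) = N X)
    {X Y : Matrix (Fin d) (Fin d) ℂ} (hdet : IsUnit (X * Yᴴ).det) :
    2 * N (X * Yᴴ) ≤ N (X * Xᴴ) + N (Y * Yᴴ) := by
  set Z : Matrix (Fin d) (Fin d) ℂ := X * Yᴴ with hZ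
  have hH : (Zᴴ * Z).PosSemidef := posSemidef_conjTranspose_mul_self Z
  set R : Matrix (Fin d) (Fin d) ℂ := hH.sqrt with hRdef
  have hRpsd : R.PosSemidef := hH.posSemidef_sqrt
  have hRR : R * R = Zᴴ * Z := hH.sqrt_mul_self
  have hRH : Rᴴ = R := hRpsd.isHermitian
  have hZdet : Z.det ≠ 0 := isUnit_iff_ne_zero.mp hdet
  have hRdet : IsUnit R.det := by
    rw [isUnit_iff_ne_zero]
    intro h
    have h2 : R.det * R.det = (Zᴴ * Z).det := by rw [← det_mul, hRR]
    rw [h, mul_zero, det_mul, det_conjTranspose] at h2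
    exact hZdet (by
      have := h2.symm
      rcases mul_eq_zero.mp this with h3 | h3
      · exact star_eq_zero.mp h3
      · exact h3)
  set U : Matrix (Fin d) (Fin d) ℂ := Z * R⁻¹ with hUdef
  have hRiH : (R⁻¹)ᴴ = R⁻¹ := by rw [conjTranspose_nonsing_inv, hRH]
  have hUmem : U ∈ Matrix.unitaryGroup (Fin d) ℂ := by
    rw [mem_unitaryGroup_iff']
    have hsU : star U = R⁻¹ * Zᴴ := by
      rw [hUdef, star_eq_conjTranspose, conjTranspose_mul, hRiH]
    rw [hsU, hUdef]
    calc R⁻¹ * Zᴴ * (Z * R⁻¹) = R⁻¹ * (Zᴴ * Z) * R⁻¹ := by simp only [Matrix.mul_assoc]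
      _ = R⁻¹ * (R * R) * R⁻¹ := by rw [hRR]
      _ = (R⁻¹ * R) * (R * R⁻¹) := by simp only [Matrix.mul_assoc]
      _ = 1 := by rw [nonsing_inv_mul _ hRdet, mul_nonsing_inv _ hRdet, Matrix.one_mul]
  have hUHmem : Uᴴ ∈ Matrix.unitaryGroup (Fin d) ℂ := by
    rw [← star_eq_conjTranspose]; exact Unitary.star_mem hUmem
  have hUR : U * R = Z := by rw [hUdef]; exact nonsing_inv_mul_cancel_right _ _ hRdet
  have hUZ : Uᴴ * Z = R := by
    have hsU : Uᴴ * U = 1 := by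
      rw [← star_eq_conjTranspose]; exact mem_unitaryGroup_iff'.mp hUmem
    rw [← hUR, ← Matrix.mul_assoc, hsU, Matrix.one_mul]
  set M : Matrix (Fin d) (Fin d) ℂ := Uᴴ * X with hM
  have hMY : M * Yᴴ = R := by
    rw [hM, Matrix.mul_assoc, ← hZ, hUZ]
  have hYM : Y * Mᴴ = R := by
    have h := congrArg conjTranspose hMY
    rwa [conjTranspose_mul, conjTranspose_conjTranspose, hRH] at h
  have hMH : Mᴴ = Xᴴ * U := by
    rw [hM, conjTranspose_mul, conjTranspose_conjTranspose]
  have hMM : M * Mᴴ = Uᴴ * (X * Xᴴ) * U := by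
    rw [hMH, hM]
    simp only [Matrix.mul_assoc]
  have hG : (M - Y) * (M - Y)ᴴ = (Uᴴ * (X * Xᴴ) * U + Y * Yᴴ) - (R + R) := by
    rw [conjTranspose_sub, Matrix.sub_mul, Matrix.mul_sub, Matrix.mul_sub, hMM, hMY, hYM]
    abel
  have hSpsd : (R + R).PosSemidef := hRpsd.add hRpsd
  have hSdet : IsUnit (R + R).det := by
    rw [← two_smul ℂ R, det_smul, isUnit_iff_ne_zero]
    exact mul_ne_zero (pow_ne_zero _ two_ne_zero) (isUnit_iff_ne_zero.mp hRdet)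
  have hTpsd : (Uᴴ * (X * Xᴴ) * U + Y * Yᴴ).PosSemidef := by
    have h1 := (posSemidef_self_mul_conjTranspose X).conjTranspose_mul_mul_same (B := U)
    exact h1.add (posSemidef_self_mul_conjTranspose Y)
  have hdiff : ((Uᴴ * (X * Xᴴ) * U + Y * Yᴴ) - (R + R)).PosSemidef := by
    rw [← hG]
    exact posSemidef_self_mul_conjTranspose (M - Y)
  have hmono := mono hN_nonneg hN_smul hN_add hN_unitary hSpsd hSdet hTpsd hdiff
  have hNZ : N Z = N R := by
    rw [← hUR]
    exact (hN_unitary U hUmem R).1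
  have hNR2 : N (R + R) = 2 * N R := by
    rw [← two_smul ℂ R, hN_smul]
    norm_num
  have hconj : N (Uᴴ * (X * Xᴴ) * U) = N (X * Xᴴ) :=
    N_unit_conj hN_unitary hUHmem hUmem (X * Xᴴ)
  have hNT := hN_add (Uᴴ * (X * Xᴴ) * U) (Y * Yᴴ)
  rw [hconj] at hNT
  rw [hNZ]
  rw [hNR2] at hmono
  linarith

private lemma pert_diff_bound
    (hN_nonneg : ∀ X, 0 ≤ N X)
    (hN_smul : ∀ (c : ℂ) (X : Matrix (Fin d) (Fin d) ℂ), N (c • X) = ‖c‖ * N X)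
    (hN_add : ∀ X Y, N (X + Y) ≤ N X + N Y)
    (P Q R : Matrix (Fin d) (Fin d) ℂ) {ε : ℝ} (hε : 0 < ε) (hε1 : ε ≤ 1) :
    |N ((P + (ε:ℂ) • 1) * (Q + (ε:ℂ) • 1) * (R + (ε:ℂ) • 1)) - N (P * Q * R)|
      ≤ ε * (N (P*Q + P*R + Q*R) + (N (P + Q + R) + N 1)) := by
  set e : ℂ := (ε:ℂ) with he
  set D : Matrix (Fin d) (Fin d) ℂ :=
    e • (P*Q + P*R + Q*R) + ((e*e) • (P + Q + R) + (e*(e*e)) • 1) with hD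
  have hexp : (P + e • 1) * (Q + e • 1) * (R + e • 1) = P * Q * R + D := by
    rw [hD]
    simp only [Matrix.add_mul, Matrix.mul_add, smul_mul_assoc, mul_smul_comm, smul_smul,
      smul_add, Matrix.mul_one, Matrix.one_mul]
    abel
  have habs1 : ‖e‖ = ε := by
    rw [he, Complex.norm_real, Real.norm_eq_abs, abs_of_pos hε]
  have habs2 : ‖e*e‖ = ε*ε := by rw [norm_mul, habs1]
  have habs3 : ‖e*(e*e)‖ = ε*(ε*ε) := by rw [norm_mul, habs1, norm_mul, habs1]
  have e1 : N (e • (P*Q + P*R + Q*R)) = ε * N (P*Q + P*R + Q*R) := by rw [hN_smul, habs1]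
  have e2 : N ((e*e) • (P + Q + R)) = (ε*ε) * N (P + Q + R) := by rw [hN_smul, habs2]
  have e3 : N ((e*(e*e)) • (1 : Matrix (Fin d) (Fin d) ℂ)) = (ε*(ε*ε)) * N 1 := by
    rw [hN_smul, habs3]
  have hND : N D ≤ ε * (N (P*Q + P*R + Q*R) + (N (P + Q + R) + N 1)) := by
    have h1 := hN_add (e • (P*Q + P*R + Q*R)) ((e*e) • (P + Q + R) + (e*(e*e)) • 1)
    have h2 := hN_add ((e*e) • (P + Q + R)) ((e*(e*e)) • 1)
    rw [e1] at h1
    rw [e2, e3] at h2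
    rw [← hD] at h1
    have hq : ε*ε ≤ ε := by nlinarith
    have hcb : ε*(ε*ε) ≤ ε := by nlinarith
    have k2 : ε*ε*N (P + Q + R) ≤ ε * N (P + Q + R) :=
      mul_le_mul_of_nonneg_right hq (hN_nonneg _)
    have k3 : ε*(ε*ε)*N (1 : Matrix (Fin d) (Fin d) ℂ) ≤ ε * N 1 :=
      mul_le_mul_of_nonneg_right hcb (hN_nonneg _)
    have hrhs : ε * (N (P*Q + P*R + Q*R) + (N (P + Q + R) + N 1))
        = ε * N (P*Q + P*R + Q*R) + (ε * N (P + Q + R) + ε * N 1) := by ring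
    linarith
  rw [hexp]
  have hup : N (P*Q*R + D) ≤ N (P*Q*R) + N D := hN_add _ _
  have hdown : N (P*Q*R) ≤ N (P*Q*R + D) + N D := by
    have h3 := hN_add (P*Q*R + D) (-D)
    have h4 : P*Q*R + D + -D = P*Q*R := by abel
    have h5 : N (-D) = N D := by
      rw [← neg_one_smul ℂ D, hN_smul]
      simp
    rw [h4, h5] at h3
    exact h3
  rw [abs_le]
  constructor <;> linarith

end NormLemmas

/-- For positive-semidefinite $A, B, C$ and a unitarily invariant norm $N$,
$N(ABA) + N(CBC) \ge N(ABC) + N(CBA)$. -/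
theorem ui_norm_sandwich_sum_ge (d : ℕ)
    (N : Matrix (Fin d) (Fin d) ℂ → ℝ)
    (hN_nonneg : ∀ X, 0 ≤ N X)
    (hN_eq_zero : ∀ X, N X = 0 ↔ X = 0)
    (hN_smul : ∀ (c : ℂ) (X : Matrix (Fin d) (Fin d) ℂ), N (c • X) = ‖c‖ * N X)
    (hN_add : ∀ X Y, N (X + Y) ≤ N X + N Y)
    (hN_unitary : ∀ U : Matrix (Fin d) (Fin d) ℂ, U ∈ Matrix.unitaryGroup (Fin d) ℂ →
      ∀ X, N (U * X) = N X ∧ N (X * U) = N X)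
    (A B C : Matrix (Fin d) (Fin d) ℂ)
    (hA : A.PosSemidef) (hB : B.PosSemidef) (hC : C.PosSemidef) :
    N (A * B * A) + N (C * B * C) ≥ N (A * B * C) + N (C * B * A) := by
  rw [ge_iff_le]
  apply le_of_forall_pos_le_add
  intro δ hδ
  set c1 : ℝ := N (A*B + A*C + B*C) + (N (A + B + C) + N 1) with hc1
  set c2 : ℝ := N (C*B + C*A + B*A) + (N (C + B + A) + N 1) with hc2
  set c3 : ℝ := N (A*B + A*A + B*A) + (N (A + B + A) + N 1) with hc3
  set c4 : ℝ := N (C*B + C*C + B*C) + (N (C + B + C) + N 1) with hc4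
  have hc1n : 0 ≤ c1 := by
    have := hN_nonneg (A*B + A*C + B*C); have := hN_nonneg (A + B + C)
    have := hN_nonneg (1 : Matrix (Fin d) (Fin d) ℂ); rw [hc1]; linarith
  have hc2n : 0 ≤ c2 := by
    have := hN_nonneg (C*B + C*A + B*A); have := hN_nonneg (C + B + A)
    have := hN_nonneg (1 : Matrix (Fin d) (Fin d) ℂ); rw [hc2]; linarith
  have hc3n : 0 ≤ c3 := by
    have := hN_nonneg (A*B + A*A + B*A); have := hN_nonneg (A + B + A)
    have := hN_nonneg (1 : Matrix (Fin d) (Fin d) ℂ); rw [hc3]; linarith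
  have hc4n : 0 ≤ c4 := by
    have := hN_nonneg (C*B + C*C + B*C); have := hN_nonneg (C + B + C)
    have := hN_nonneg (1 : Matrix (Fin d) (Fin d) ℂ); rw [hc4]; linarith
  set Ct : ℝ := c1 + c2 + c3 + c4 + 1 with hCt
  have hCtpos : 0 < Ct := by rw [hCt]; linarith
  set ε : ℝ := min 1 (δ / Ct) with hεdef
  have hε0 : 0 < ε := lt_min one_pos (div_pos hδ hCtpos)
  have hε1 : ε ≤ 1 := min_le_left _ _
  have hεC : ε * Ct ≤ δ := by
    have h := min_le_right 1 (δ / Ct)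
    calc ε * Ct ≤ (δ / Ct) * Ct := mul_le_mul_of_nonneg_right h hCtpos.le
      _ = δ := div_mul_cancel₀ δ hCtpos.ne'
  set Aε : Matrix (Fin d) (Fin d) ℂ := A + (ε:ℂ) • 1 with hAe
  set Bε : Matrix (Fin d) (Fin d) ℂ := B + (ε:ℂ) • 1 with hBe
  set Cε : Matrix (Fin d) (Fin d) ℂ := C + (ε:ℂ) • 1 with hCe
  have hAε : Aε.PosDef := Matrix.PosDef.posSemidef_add hA (posDef_smul_one hε0)
  have hBε : Bε.PosDef := Matrix.PosDef.posSemidef_add hB (posDef_smul_one hε0)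
  have hCε : Cε.PosDef := Matrix.PosDef.posSemidef_add hC (posDef_smul_one hε0)
  have hAεH : Aεᴴ = Aε := hAε.isHermitian
  have hCεH : Cεᴴ = Cε := hCε.isHermitian
  set S : Matrix (Fin d) (Fin d) ℂ := hBε.posSemidef.sqrt with hSdef
  have hSH : Sᴴ = S := hBε.posSemidef.posSemidef_sqrt.isHermitian
  have hSS : S * S = Bε := hBε.posSemidef.sqrt_mul_self
  have hXYH : (Aε * S) * (Cε * S)ᴴ = Aε * Bε * Cε := by
    rw [conjTranspose_mul, hSH, hCεH]
    calc Aε * S * (S * Cε) = Aε * (S * S) * Cε := by simp only [Matrix.mul_assoc]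
      _ = Aε * Bε * Cε := by rw [hSS]
  have hYXH : (Cε * S) * (Aε * S)ᴴ = Cε * Bε * Aε := by
    rw [conjTranspose_mul, hSH, hAεH]
    calc Cε * S * (S * Aε) = Cε * (S * S) * Aε := by simp only [Matrix.mul_assoc]
      _ = Cε * Bε * Aε := by rw [hSS]
  have hXXH : (Aε * S) * (Aε * S)ᴴ = Aε * Bε * Aε := by
    rw [conjTranspose_mul, hSH, hAεH]
    calc Aε * S * (S * Aε) = Aε * (S * S) * Aε := by simp only [Matrix.mul_assoc]
      _ = Aε * Bε * Aε := by rw [hSS]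
  have hYYH : (Cε * S) * (Cε * S)ᴴ = Cε * Bε * Cε := by
    rw [conjTranspose_mul, hSH, hCεH]
    calc Cε * S * (S * Cε) = Cε * (S * S) * Cε := by simp only [Matrix.mul_assoc]
      _ = Cε * Bε * Cε := by rw [hSS]
  have hdet1 : IsUnit ((Aε * S) * (Cε * S)ᴴ).det := by
    rw [hXYH]
    exact (Matrix.isUnit_iff_isUnit_det _).mp ((hAε.isUnit.mul hBε.isUnit).mul hCε.isUnit)
  have hdet2 : IsUnit ((Cε * S) * (Aε * S)ᴴ).det := by
    rw [hYXH]
    exact (Matrix.isUnit_iff_isUnit_det _).mp ((hCε.isUnit.mul hBε.isUnit).mul hAε.isUnit)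
  have h1 := cs hN_nonneg hN_smul hN_add hN_unitary hdet1
  have h2 := cs hN_nonneg hN_smul hN_add hN_unitary hdet2
  rw [hXYH, hXXH, hYYH] at h1
  rw [hYXH, hYYH, hXXH] at h2
  have p1 := pert_diff_bound hN_nonneg hN_smul hN_add A B C hε0 hε1
  have p2 := pert_diff_bound hN_nonneg hN_smul hN_add C B A hε0 hε1
  have p3 := pert_diff_bound hN_nonneg hN_smul hN_add A B A hε0 hε1
  have p4 := pert_diff_bound hN_nonneg hN_smul hN_add C B C hε0 hε1
  rw [abs_le] at p1 p2 p3 p4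
  simp only [← hAe, ← hBe, ← hCe] at p1 p2 p3 p4
  rw [← hc1] at p1
  rw [← hc2] at p2
  rw [← hc3] at p3
  rw [← hc4] at p4
  obtain ⟨p1l, p1r⟩ := p1
  obtain ⟨p2l, p2r⟩ := p2
  obtain ⟨p3l, p3r⟩ := p3
  obtain ⟨p4l, p4r⟩ := p4
  have hsum : ε * c1 + ε * c2 + ε * c3 + ε * c4 ≤ δ := by
    have h : c1 + c2 + c3 + c4 ≤ Ct := by rw [hCt]; linarith
    have h' : ε * (c1 + c2 + c3 + c4) ≤ ε * Ct := mul_le_mul_of_nonneg_left h hε0.le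
    nlinarith
  linarith
end

section
/- Let A, B ∈ M(d) be positive-semidefinite. Then ‖B²A‖ ≥ ‖BAB‖, where ‖·‖ is the operator norm. -/
open Matrix Finset
open scoped ComplexOrder

lemma biSup_nnnorm_diff_zero {𝕜 : Type*} [NormedField 𝕜] (s : Set 𝕜) :
    (⨆ k ∈ s, (‖k‖₊ : ENNReal)) = ⨆ k ∈ s \ {0}, (‖k‖₊ : ENNReal) := by
  apply le_antisymm
  · refine iSup₂_le fun k hk => ?_
    by_cases h : k = 0
    · simp [h]
    · exact le_iSup₂ (f := fun k _ => (‖k‖₊ : ENNReal)) k ⟨hk, h⟩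
  · exact iSup₂_le fun k hk => le_iSup₂ (f := fun k _ => (‖k‖₊ : ENNReal)) k hk.1

lemma spectralRadius_mul_comm {𝕜 A : Type*} [NormedField 𝕜] [Ring A] [Algebra 𝕜 A]
    (a b : A) : spectralRadius 𝕜 (a * b) = spectralRadius 𝕜 (b * a) := by
  rw [spectralRadius, spectralRadius, biSup_nnnorm_diff_zero,
    biSup_nnnorm_diff_zero (spectrum 𝕜 (b * a)), spectrum.nonzero_mul_comm]

/-- For positive-semidefinite $A, B$, $\|B^2A\| \ge \|BAB\|$ in the operator norm. -/
theorem op_norm_sq_mul_ge_sandwich (d : ℕ)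
    (A B : Matrix (Fin d) (Fin d) ℂ) (hA : A.PosSemidef) (hB : B.PosSemidef) :
    opNorm (B ^ 2 * A) ≥ opNorm (B * A * B) := by
  rcases Nat.eq_zero_or_pos d with hd | hd
  · subst hd
    exact ge_of_eq (congrArg opNorm (Subsingleton.elim _ _))
  haveI : Nontrivial (EuclideanSpace ℂ (Fin d)) := by
    haveI : Nonempty (Fin d) := ⟨⟨0, hd⟩⟩
    infer_instance
  set T := Matrix.toEuclideanCLM (𝕜 := ℂ) (n := Fin d)
  have hsa : IsSelfAdjoint (T (B * A * B)) := by
    rw [_root_.IsSelfAdjoint, ← map_star]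
    congr 1
    simp only [star_eq_conjTranspose, conjTranspose_mul, hA.1.eq, hB.1.eq, mul_assoc]
  have key : (‖T (B * A * B)‖₊ : ENNReal) ≤ (‖T (B ^ 2 * A)‖₊ : ENNReal) := by
    calc (‖T (B * A * B)‖₊ : ENNReal)
        = spectralRadius ℂ (T (B * A * B)) := hsa.spectralRadius_eq_nnnorm.symm
      _ = spectralRadius ℂ (T (B * A) * T B) := by rw [← _root_.map_mul]
      _ = spectralRadius ℂ (T B * T (B * A)) := spectralRadius_mul_comm _ _
      _ = spectralRadius ℂ (T (B ^ 2 * A)) := by rw [← _root_.map_mul, ← mul_assoc, ← sq]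
      _ ≤ ‖T (B ^ 2 * A)‖₊ := spectrum.spectralRadius_le_nnnorm (𝕜 := ℂ) _
  have := ENNReal.coe_le_coe.mp key
  exact this
end

section
/- Let x = (x_1, …, x_d) and y = (y_1, …, y_d) be real vectors with x_1 ≥ x_2 ≥ ⋯ ≥ x_d ≥ 0 and y_1 ≥ y_2 ≥ ⋯ ≥ y_d ≥ 0. If ∏_{i=1}^{k} x_i ≤ ∏_{i=1}^{k} y_i for all k = 1, …, d, then x is weakly majorized by y, i.e., Σ_{i=1}^{k} x_i ≤ Σ_{i=1}^{k} y_i for all k = 1, …, d. -/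
open Finset

/-- Abel summation positivity: if weights `w` are nonneg and nonincreasing on `range n`,
and all partial sums of `f` up to `n` are nonneg, then `∑ w i * f i ≥ 0`. -/
lemma abel_nonneg_aux : ∀ (n : ℕ) (w f : ℕ → ℝ),
    (∀ i j, i ≤ j → j < n → w j ≤ w i) → (∀ i, i < n → 0 ≤ w i) →
    (∀ m, m ≤ n → 0 ≤ ∑ i ∈ Finset.range m, f i) →
    0 ≤ ∑ i ∈ Finset.range n, w i * f i := by
  intro n
  induction n with
  | zero => intro w f _ _ _; simp
  | succ n ih =>
    intro w f hmono hnn hps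
    have hsplit : ∑ i ∈ Finset.range n, w i * f i
        = ∑ i ∈ Finset.range n, ((w i - w n) * f i + w n * f i) :=
      Finset.sum_congr rfl (fun i _ => by ring)
    have key : ∑ i ∈ Finset.range (n+1), w i * f i
        = (∑ i ∈ Finset.range n, (w i - w n) * f i) + w n * ∑ i ∈ Finset.range (n+1), f i := by
      rw [Finset.mul_sum, Finset.sum_range_succ (f := fun i => w i * f i),
        Finset.sum_range_succ (f := fun i => w n * f i), hsplit, Finset.sum_add_distrib]
      ring
    rw [key]
    have h1 : 0 ≤ ∑ i ∈ Finset.range n, (w i - w n) * f i := by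
      apply ih
      · intro i j hij hj
        have := hmono i j hij (Nat.lt_succ_of_lt hj)
        linarith
      · intro i hi
        have := hmono i n (Nat.le_of_lt hi) (Nat.lt_succ_self n)
        linarith
      · intro m hm; exact hps m (Nat.le_succ_of_le hm)
    have h2 : 0 ≤ w n * ∑ i ∈ Finset.range (n+1), f i :=
      mul_nonneg (hnn n (Nat.lt_succ_self n)) (hps (n+1) le_rfl)
    linarith

/-- Positive case over `range n`. -/
lemma sum_le_of_prod_le_aux (n : ℕ) (X Y : ℕ → ℝ)
    (hXmono : ∀ i j, i ≤ j → j < n → X j ≤ X i)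
    (hXpos : ∀ i, i < n → 0 < X i) (hYpos : ∀ i, i < n → 0 < Y i)
    (hP : ∀ m, m ≤ n → ∏ i ∈ Finset.range m, X i ≤ ∏ i ∈ Finset.range m, Y i) :
    ∑ i ∈ Finset.range n, X i ≤ ∑ i ∈ Finset.range n, Y i := by
  have pointwise : ∀ i, i < n → X i * (Real.log (Y i) - Real.log (X i)) ≤ Y i - X i := by
    intro i hi
    have hx := hXpos i hi
    have hy := hYpos i hi
    have hlog : Real.log (Y i / X i) ≤ Y i / X i - 1 :=
      Real.log_le_sub_one_of_pos (div_pos hy hx)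
    rw [Real.log_div (ne_of_gt hy) (ne_of_gt hx)] at hlog
    have := mul_le_mul_of_nonneg_left hlog (le_of_lt hx)
    calc X i * (Real.log (Y i) - Real.log (X i)) ≤ X i * (Y i / X i - 1) := this
      _ = Y i - X i := by field_simp
  have habel : 0 ≤ ∑ i ∈ Finset.range n, X i * (Real.log (Y i) - Real.log (X i)) := by
    apply abel_nonneg_aux n X (fun i => Real.log (Y i) - Real.log (X i)) hXmono
      (fun i hi => le_of_lt (hXpos i hi))
    intro m hm
    rw [Finset.sum_sub_distrib, sub_nonneg, ← Real.log_prod (fun i hi => ne_of_gt (hXpos i (lt_of_lt_of_le (Finset.mem_range.mp hi) hm))),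
      ← Real.log_prod (fun i hi => ne_of_gt (hYpos i (lt_of_lt_of_le (Finset.mem_range.mp hi) hm)))]
    apply Real.log_le_log
    · exact Finset.prod_pos (fun i hi => hXpos i (lt_of_lt_of_le (Finset.mem_range.mp hi) hm))
    · exact hP m hm
  have := Finset.sum_le_sum (fun i hi => pointwise i (Finset.mem_range.mp hi))
  have hsub : ∑ i ∈ Finset.range n, (Y i - X i)
      = ∑ i ∈ Finset.range n, Y i - ∑ i ∈ Finset.range n, X i := Finset.sum_sub_distrib _ _
  linarith [le_trans habel this, hsub ▸ le_trans habel this]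

/-- Lemma A.2: if `x` and `y` are non-increasing nonnegative vectors whose partial products
satisfy `∏_{i=1}^k x_i ≤ ∏_{i=1}^k y_i` for all `k = 1,…,d`, then `x` is weakly majorized
by `y`: `∑_{i=1}^k x_i ≤ ∑_{i=1}^k y_i` for all `k = 1,…,d`. -/
theorem weak_majorization_of_prod_le (d : ℕ) (x y : Fin d → ℝ)
    (hx_mono : Antitone x) (hx_nonneg : ∀ i, 0 ≤ x i)
    (hy_mono : Antitone y) (hy_nonneg : ∀ i, 0 ≤ y i)
    (hprod : ∀ k : Fin d, ∏ i ∈ Finset.Iic k, x i ≤ ∏ i ∈ Finset.Iic k, y i) :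
    ∀ k : Fin d, ∑ i ∈ Finset.Iic k, x i ≤ ∑ i ∈ Finset.Iic k, y i := by
  intro k
  -- extend to ℕ
  set X : ℕ → ℝ := fun i => if h : i < d then x ⟨i, h⟩ else 0 with hXdef
  set Y : ℕ → ℝ := fun i => if h : i < d then y ⟨i, h⟩ else 0 with hYdef
  have hXval : ∀ (i : Fin d), X i.val = x i := by
    intro i; simp [hXdef, i.isLt]
  have hYval : ∀ (i : Fin d), Y i.val = y i := by
    intro i; simp [hYdef, i.isLt]
  -- transfer sums/products over Iic to range
  have hrange : ∀ (j : ℕ) (hj : j ≤ k.val),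
      (∑ i ∈ Finset.range (j+1), X i = ∑ i ∈ Finset.Iic (⟨j, lt_of_le_of_lt hj k.isLt⟩ : Fin d), x i)
      ∧ (∑ i ∈ Finset.range (j+1), Y i = ∑ i ∈ Finset.Iic (⟨j, lt_of_le_of_lt hj k.isLt⟩ : Fin d), y i)
      ∧ (∏ i ∈ Finset.range (j+1), X i = ∏ i ∈ Finset.Iic (⟨j, lt_of_le_of_lt hj k.isLt⟩ : Fin d), x i)
      ∧ (∏ i ∈ Finset.range (j+1), Y i = ∏ i ∈ Finset.Iic (⟨j, lt_of_le_of_lt hj k.isLt⟩ : Fin d), y i) := by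
    intro j hj
    set b : Fin d := ⟨j, lt_of_le_of_lt hj k.isLt⟩ with hb
    have hIic : Finset.range (j+1) = (Finset.Iic b).map Fin.valEmbedding := by
      rw [Fin.map_valEmbedding_Iic]
      ext m; simp [Nat.lt_succ_iff, hb]
    refine ⟨?_, ?_, ?_, ?_⟩
    · rw [hIic, Finset.sum_map]; exact Finset.sum_congr rfl (fun i _ => hXval i)
    · rw [hIic, Finset.sum_map]; exact Finset.sum_congr rfl (fun i _ => hYval i)
    · rw [hIic, Finset.prod_map]; exact Finset.prod_congr rfl (fun i _ => hXval i)
    · rw [hIic, Finset.prod_map]; exact Finset.prod_congr rfl (fun i _ => hYval i)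
  set n : ℕ := k.val + 1 with hn
  have hnd : n ≤ d := k.isLt
  -- basic facts about X, Y on range n
  have hXmono : ∀ i j, i ≤ j → j < n → X j ≤ X i := by
    intro i j hij hj
    have hjd : j < d := lt_of_lt_of_le hj hnd
    have hid : i < d := lt_of_le_of_lt hij hjd
    have := hx_mono (a := ⟨i, hid⟩) (b := ⟨j, hjd⟩) hij
    simpa [hXdef, hid, hjd] using this
  have hXnn : ∀ i, i < n → 0 ≤ X i := by
    intro i hi
    have hid : i < d := lt_of_lt_of_le hi hnd
    simpa [hXdef, hid] using hx_nonneg ⟨i, hid⟩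
  have hYnn : ∀ i, i < n → 0 ≤ Y i := by
    intro i hi
    have hid : i < d := lt_of_lt_of_le hi hnd
    simpa [hYdef, hid] using hy_nonneg ⟨i, hid⟩
  -- partial product inequality in ℕ-land
  have hPn : ∀ m, m ≤ n → ∏ i ∈ Finset.range m, X i ≤ ∏ i ∈ Finset.range m, Y i := by
    intro m hm
    match m, hm with
    | 0, _ => simp
    | (j+1), hm =>
      have hj : j ≤ k.val := Nat.lt_succ_iff.mp hm
      obtain ⟨_, _, h3, h4⟩ := hrange j hj
      rw [h3, h4]
      exact hprod _
  -- m : the positive prefix length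
  by_cases hex : ∃ i, i < n ∧ X i = 0
  case pos =>
    set m := Nat.find hex with hm
    obtain ⟨hmn, hXm0⟩ := Nat.find_spec hex
    have hmlen : m ≤ n := le_of_lt hmn
    have hpos : ∀ i, i < m → 0 < X i := by
      intro i hi
      have hne := Nat.find_min hex hi
      have : X i ≠ 0 := fun h => hne ⟨lt_trans hi hmn, h⟩
      exact lt_of_le_of_ne (hXnn i (lt_trans hi hmn)) (Ne.symm this)
    have hzero : ∀ i, m ≤ i → i < n → X i = 0 := by
      intro i hmi hi
      have h1 := hXmono m i hmi hi
      have h2 := hXnn i hi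
      rw [hXm0] at h1
      linarith
    have hYpos : ∀ i, i < m → 0 < Y i := by
      intro i hi
      have hprodpos : 0 < ∏ j ∈ Finset.range (i+1), X j :=
        Finset.prod_pos (fun j hj => hpos j (lt_of_lt_of_le (Finset.mem_range.mp hj) hi))
      have hle := hPn (i+1) (le_trans hi hmlen)
      by_contra hY
      push_neg at hY
      have hY0 : Y i = 0 := le_antisymm hY (hYnn i (lt_of_lt_of_le hi hmlen))
      have : ∏ j ∈ Finset.range (i+1), Y j = 0 :=
        Finset.prod_eq_zero (Finset.self_mem_range_succ i) hY0
      linarith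
    have hmain : ∑ i ∈ Finset.range m, X i ≤ ∑ i ∈ Finset.range m, Y i :=
      sum_le_of_prod_le_aux m X Y (fun i j hij hj => hXmono i j hij (lt_of_lt_of_le hj hmlen))
        hpos hYpos (fun m' hm' => hPn m' (le_trans hm' hmlen))
    have hXeq : ∑ i ∈ Finset.range n, X i = ∑ i ∈ Finset.range m, X i := by
      rw [← Finset.sum_range_add_sum_Ico X hmlen]
      have : ∑ i ∈ Finset.Ico m n, X i = 0 :=
        Finset.sum_eq_zero (fun i hi => hzero i (Finset.mem_Ico.mp hi).1 (Finset.mem_Ico.mp hi).2)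
      rw [this, add_zero]
    have hYle : ∑ i ∈ Finset.range m, Y i ≤ ∑ i ∈ Finset.range n, Y i := by
      apply Finset.sum_le_sum_of_subset_of_nonneg (Finset.range_subset_range.mpr hmlen)
      intro i hi _
      exact hYnn i (Finset.mem_range.mp hi)
    obtain ⟨h1, h2, _, _⟩ := hrange k.val le_rfl
    have hk : (⟨k.val, lt_of_le_of_lt le_rfl k.isLt⟩ : Fin d) = k := rfl
    rw [hk] at h1 h2
    rw [← h1, ← h2, ← hn]
    calc ∑ i ∈ Finset.range n, X i = ∑ i ∈ Finset.range m, X i := hXeq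
      _ ≤ ∑ i ∈ Finset.range m, Y i := hmain
      _ ≤ ∑ i ∈ Finset.range n, Y i := hYle
  case neg =>
    push_neg at hex
    have hpos : ∀ i, i < n → 0 < X i := fun i hi =>
      lt_of_le_of_ne (hXnn i hi) (Ne.symm (hex i hi))
    have hYpos : ∀ i, i < n → 0 < Y i := by
      intro i hi
      have hprodpos : 0 < ∏ j ∈ Finset.range (i+1), X j :=
        Finset.prod_pos (fun j hj => hpos j (lt_of_lt_of_le (Finset.mem_range.mp hj) hi))
      have hle := hPn (i+1) hi
      by_contra hY
      push_neg at hY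
      have hY0 : Y i = 0 := le_antisymm hY (hYnn i hi)
      have : ∏ j ∈ Finset.range (i+1), Y j = 0 :=
        Finset.prod_eq_zero (Finset.self_mem_range_succ i) hY0
      linarith
    have hmain : ∑ i ∈ Finset.range n, X i ≤ ∑ i ∈ Finset.range n, Y i :=
      sum_le_of_prod_le_aux n X Y hXmono hpos hYpos hPn
    obtain ⟨h1, h2, _, _⟩ := hrange k.val le_rfl
    have hk : (⟨k.val, lt_of_le_of_lt le_rfl k.isLt⟩ : Fin d) = k := rfl
    rw [hk] at h1 h2
    rw [← h1, ← h2]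
    exact hmain
end
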